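/- arXiv:2005.14180 — 6 statements merged into one kernel-verified Lean document; each statement's English description precedes it below -/
import Mathlib

section
/- Let 𝒳 be a finite nonempty set, let κ > 0, and let z ∈ ℂ with Im z > 0 and |Re z| ≤ 2 − κ. Suppose two vectors (g_x)_{x∈𝒳}, (ε_x)_{x∈𝒳} ∈ ℂ^𝒳 satisfy, for every x ∈ 𝒳, the identity 1/g_x = −z − |𝒳|^{−1}·∑_{y∈𝒳} g_y + ε_x. Then there are constants b, C ∈ (0, ∞), depending only on κ, such that: if max_{x∈𝒳} |g_x − m(z)| ≤ b then max_{x∈𝒳} |g_x − m(z)| ≤ C·max_{x∈𝒳} |ε_x|. -/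
/-!
Write `S` for the average of the `g x`. Comparing `g x (-z - S + ε x) = 1` with `m (-z - m) = 1`
gives `g x - m = g x m (S - m - ε x)`, and averaging gives `(S - m)(1 - m S) = -m 𝔼 (g ε)`.
Since `(z + 2m)² = z² - 4`, the factor `1 - m²` is bounded below in terms of `κ` away from the
spectral edges `±2`; hence so is `1 - m S` once `g` is close to `m`. This bounds `S - m`, and then
each `g x - m`, by a multiple of `max |ε|`.
-/

open Finset
open scoped BigOperators

section SelfConsistentEquation

variable {κ : ℝ} {z m : ℂ}

theorem mul_neg_sub_self_eq_one (hm_im : 0 < m.im) (hm : m = 1 / (-z - m)) :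
    m * (-z - m) = 1 := by
  have hm0 : m ≠ 0 := fun h ↦ by simp [h] at hm_im
  have hden : -z - m ≠ 0 := fun h ↦ hm0 (by simpa [h] using hm)
  nth_rw 1 [hm]
  exact one_div_mul_cancel hden

theorem norm_lt_one_of_mul_neg_sub_self_eq_one (hz : 0 < z.im) (hm_im : 0 < m.im)
    (hm : m * (-z - m) = 1) : ‖m‖ < 1 := by
  have hinv : m⁻¹ = -z - m := eq_inv_of_mul_eq_one_right hm |>.symm
  have hns : 0 < Complex.normSq m := Complex.normSq_pos.mpr (left_ne_zero_of_mul_eq_one hm)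
  have him : -m.im / Complex.normSq m = -z.im - m.im := by
    simpa [Complex.inv_im] using congrArg Complex.im hinv
  have hsq : Complex.normSq m < 1 := by
    rw [div_eq_iff hns.ne'] at him
    nlinarith
  rw [Complex.normSq_eq_norm_sq] at hsq
  nlinarith [norm_nonneg m]

theorem le_norm_add_two_mul (hre : |z.re| ≤ 2 - κ) (hm : m * (-z - m) = 1) :
    κ ≤ ‖z + 2 * m‖ := by
  rcases lt_or_ge κ 0 with hκ | hκ
  · exact hκ.le.trans (norm_nonneg _)
  have hre' := abs_le.mp hre
  have hsub : κ ≤ ‖z - 2‖ := by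
    refine le_trans ?_ (Complex.abs_re_le_norm _)
    simp only [Complex.sub_re, Complex.re_ofNat]
    rw [abs_of_nonpos] <;> linarith
  have hadd : κ ≤ ‖z + 2‖ := by
    refine le_trans ?_ (Complex.abs_re_le_norm _)
    simp only [Complex.add_re, Complex.re_ofNat]
    rw [abs_of_nonneg] <;> linarith
  have hsq : ‖z + 2 * m‖ ^ 2 = ‖z - 2‖ * ‖z + 2‖ := by
    rw [← norm_pow, ← norm_mul]; congr 1; linear_combination (-4) * hm
  rw [← pow_le_pow_iff_left₀ hκ (norm_nonneg _) two_ne_zero, hsq, sq]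
  exact mul_le_mul hsub hadd hκ (norm_nonneg _)

theorem min_le_norm_one_sub_sq (hre : |z.re| ≤ 2 - κ) (hm : m * (-z - m) = 1) :
    min (3 / 4) (κ / 2) ≤ ‖1 - m ^ 2‖ := by
  rcases le_or_gt ‖m‖ (1 / 2) with hsmall | hlarge
  · refine (min_le_left _ _).trans ?_
    calc (3 / 4 : ℝ) ≤ ‖(1 : ℂ)‖ - ‖m ^ 2‖ := by
          rw [norm_one, norm_pow]; nlinarith [norm_nonneg m]
      _ ≤ ‖1 - m ^ 2‖ := norm_sub_norm_le _ _
  · refine (min_le_right _ _).trans ?_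
    have hκ := le_norm_add_two_mul hre hm
    have h : 1 - m ^ 2 = -(m * (z + 2 * m)) := by linear_combination -hm
    rw [h, norm_neg, norm_mul]
    nlinarith [norm_nonneg (z + 2 * m)]

theorem sub_eq_mul_mul_sub_sub {w S e : ℂ} (hm : m * (-z - m) = 1)
    (hw : w * (-z - S + e) = 1) : w - m = w * m * (S - m - e) := by
  linear_combination m * hw - w * hm

theorem one_le_norm_of_neg_sub_add_eq_zero {S e : ℂ} (hm : m * (-z - m) = 1)
    (hm_small : ‖m‖ ≤ 1 / 2) (hS : ‖S - m‖ ≤ 1 / 2) (he : -z - S + e = 0) : 1 ≤ ‖e‖ := by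
  have hzm : ‖m‖ * ‖z + m‖ = 1 := by
    rw [← norm_mul, show m * (z + m) = -1 by linear_combination -hm, norm_neg, norm_one]
  have hzm_large : 2 ≤ ‖z + m‖ := by nlinarith [norm_nonneg (z + m)]
  calc (1 : ℝ) ≤ ‖z + m‖ - ‖S - m‖ := by linarith
    _ ≤ ‖(z + m) + (S - m)‖ := norm_sub_le_norm_add _ _
    _ = ‖e‖ := by rw [show e = (z + m) + (S - m) by linear_combination he]

end SelfConsistentEquation

theorem norm_expect_sub_le {ι 𝕜 : Type*} [Fintype ι] [Nonempty ι] [RCLike 𝕜] {f : ι → 𝕜}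
    {a : 𝕜} {b : ℝ} (h : ∀ x, ‖f x - a‖ ≤ b) : ‖𝔼 y, f y - a‖ ≤ b := by
  rw [← Fintype.expect_const (ι := ι) a, ← expect_sub_distrib]
  exact (RCLike.norm_expect_le (K := 𝕜)).trans (expect_le univ_nonempty fun x _ ↦ h x)

section Stability

variable {ι : Type*} [Fintype ι] [Nonempty ι] {z m : ℂ} {g ε : ι → ℂ} {δ E : ℝ}

theorem expect_sub_mul_one_sub_mul_expect (hm : m * (-z - m) = 1)
    (hg : ∀ x, g x * (-z - 𝔼 y, g y + ε x) = 1) :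
    (𝔼 y, g y - m) * (1 - m * 𝔼 y, g y) = -(m * 𝔼 y, g y * ε y) := by
  set S := 𝔼 y, g y
  have hpoint : ∀ x, g x - m = m * (S - m) * g x - m * (g x * ε x) := fun x ↦ by
    rw [sub_eq_mul_mul_sub_sub hm (hg x)]; ring
  have havg := congrArg (fun f : ι → ℂ ↦ 𝔼 x, f x) (funext hpoint)
  simp only [expect_sub_distrib, Fintype.expect_const, ← mul_expect] at havg
  linear_combination havg

theorem norm_expect_sub_mul_le (hm : m * (-z - m) = 1) (hm1 : ‖m‖ ≤ 1)
    (hδ : δ ≤ ‖1 - m ^ 2‖) (hg : ∀ x, g x * (-z - 𝔼 y, g y + ε x) = 1)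
    (hgm : ∀ x, ‖g x - m‖ ≤ δ / 2) (hgb : ∀ x, ‖g x‖ ≤ 3 / 2) (hε : ∀ x, ‖ε x‖ ≤ E) :
    ‖𝔼 y, g y - m‖ * (δ / 2) ≤ 3 / 2 * E := by
  set S := 𝔼 y, g y
  have hS : ‖S - m‖ ≤ δ / 2 := norm_expect_sub_le hgm
  have hT : ‖𝔼 y, g y * ε y‖ ≤ 3 / 2 * E := by
    refine (RCLike.norm_expect_le (K := ℂ)).trans (expect_le univ_nonempty fun x _ ↦ ?_)
    rw [norm_mul]
    exact mul_le_mul (hgb x) (hε x) (norm_nonneg _) (by norm_num)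
  have hden : δ / 2 ≤ ‖1 - m * S‖ :=
    calc δ / 2 ≤ ‖1 - m ^ 2‖ - ‖m‖ * ‖S - m‖ := by nlinarith [norm_nonneg (S - m)]
      _ = ‖1 - m ^ 2‖ - ‖m * (S - m)‖ := by rw [norm_mul]
      _ ≤ ‖(1 - m ^ 2) - m * (S - m)‖ := norm_sub_norm_le _ _
      _ = ‖1 - m * S‖ := by ring_nf
  calc ‖S - m‖ * (δ / 2) ≤ ‖S - m‖ * ‖1 - m * S‖ := by gcongr
    _ = ‖m‖ * ‖𝔼 y, g y * ε y‖ := by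
      rw [← norm_mul, ← norm_mul, expect_sub_mul_one_sub_mul_expect hm hg, norm_neg]
    _ ≤ 1 * (3 / 2 * E) := mul_le_mul hm1 hT (norm_nonneg _) zero_le_one
    _ = 3 / 2 * E := one_mul _

theorem norm_sub_le_of_one_div_eq (hδ : 0 < δ) (hδ1 : δ ≤ 1) (hm : m * (-z - m) = 1)
    (hm1 : ‖m‖ ≤ 1) (hδm : δ ≤ ‖1 - m ^ 2‖) (hg : ∀ x, 1 / g x = -z - 𝔼 y, g y + ε x)
    (hgm : ∀ x, ‖g x - m‖ ≤ δ / 2) (hε : ∀ x, ‖ε x‖ ≤ E) (x : ι) :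
    ‖g x - m‖ ≤ (9 / (2 * δ) + 3 / 2) * E := by
  have hC : 3 / 2 ≤ 9 / (2 * δ) + 3 / 2 := le_add_of_nonneg_left (by positivity)
  by_cases hzero : ∃ x₀, g x₀ = 0
  · -- since `1 / 0 = 0`, a vanishing `g x₀` forces `ε x₀ = z + 𝔼 y, g y`, which is large
    obtain ⟨x₀, hx₀⟩ := hzero
    have he : -z - 𝔼 y, g y + ε x₀ = 0 := by simpa [hx₀] using (hg x₀).symm
    have hm_small : ‖m‖ ≤ 1 / 2 := by
      simpa [hx₀] using (hgm x₀).trans (by linarith : δ / 2 ≤ 1 / 2)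
    have hS : ‖𝔼 y, g y - m‖ ≤ 1 / 2 := norm_expect_sub_le fun y ↦ (hgm y).trans (by linarith)
    have hE : 1 ≤ E := (one_le_norm_of_neg_sub_add_eq_zero hm hm_small hS he).trans (hε x₀)
    calc ‖g x - m‖ ≤ 3 / 2 * 1 := by linarith [hgm x]
      _ ≤ (9 / (2 * δ) + 3 / 2) * E := mul_le_mul hC hE zero_le_one (by positivity)
  push Not at hzero
  set S := 𝔼 y, g y
  have hg' : ∀ x, g x * (-z - S + ε x) = 1 := fun x ↦ by
    rw [← hg x, mul_one_div_cancel (hzero x)]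
  have hgb : ∀ x, ‖g x‖ ≤ 3 / 2 := fun x ↦ by
    linarith [norm_le_norm_sub_add (g x) m, hgm x]
  have hS : ‖S - m‖ ≤ 3 * E / δ := by
    rw [le_div_iff₀ hδ]
    linarith [norm_expect_sub_mul_le hm hm1 hδm hg' hgm hgb hε]
  calc ‖g x - m‖ = ‖g x‖ * ‖m‖ * ‖S - m - ε x‖ := by
        rw [sub_eq_mul_mul_sub_sub hm (hg' x), norm_mul, norm_mul]
    _ ≤ 3 / 2 * 1 * (3 * E / δ + E) := by
        gcongr
        · exact hgb x
        · exact (norm_sub_le _ _).trans (add_le_add hS (hε x))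
    _ = (9 / (2 * δ) + 3 / 2) * E := by field_simp; ring

end Stability

/-- Lemma 3.14 (Stability of the self-consistent equation for `m`).
Here `m` is the Stieltjes transform of the semicircle law at `z`, i.e. the unique
solution in the upper half-plane of `m = 1/(−z − m)`. -/
theorem stability_self_consistent_equation :
    ∀ κ : ℝ, 0 < κ → ∃ b C : ℝ, 0 < b ∧ 0 < C ∧
    ∀ (𝒳 : Type) (_ : Fintype 𝒳) (_ : Nonempty 𝒳) (z : ℂ) (g ε : 𝒳 → ℂ) (m : ℂ),
      0 < z.im → |z.re| ≤ 2 - κ →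
      0 < m.im → m = 1 / (-z - m) →
      (∀ x, 1 / g x = -z - (Fintype.card 𝒳 : ℂ)⁻¹ * ∑ y, g y + ε x) →
      (∀ x, ‖g x - m‖ ≤ b) →
      ∀ x, ‖g x - m‖ ≤ C * ⨆ y, ‖ε y‖ := by
  intro κ hκ
  set δ := min (3 / 4) (κ / 2)
  have hδ : 0 < δ := lt_min (by norm_num) (by linarith)
  have hδ1 : δ ≤ 1 := (min_le_left _ _).trans (by norm_num)
  refine ⟨δ / 2, 9 / (2 * δ) + 3 / 2, by positivity, by positivity, ?_⟩
  intro 𝒳 _ _ z g ε m hz hre hm_im hm hg hgm x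
  have hm' := mul_neg_sub_self_eq_one hm_im hm
  have hg' : ∀ x, 1 / g x = -z - 𝔼 y, g y + ε x := by
    simpa only [Fintype.expect_eq_sum_div_card, div_eq_inv_mul] using hg
  exact norm_sub_le_of_one_div_eq hδ hδ1 hm'
    (norm_lt_one_of_mul_neg_sub_self_eq_one hz hm_im hm').le
    (min_le_norm_one_sub_sq hre hm') hg' hgm
    (fun y ↦ le_ciSup (f := fun y ↦ ‖ε y‖) (Set.finite_range _).bddAbove y) x
end

section
/- There is a universal constant c > 0 with the following property. Let d ≥ 1 and r ≥ 2 be integers, let G be a finite graph with a distinguished vertex o such that the subgraph induced by G on the ball B_r(o) of radius r around o is a tree in which every vertex at distance at most r − 1 from o has degree exactly d in G. Let S be 1/d times the adjacency matrix of G, let α ∈ ℂ with |α| = 1, and assume that α·I − S is invertible. Then the operator norm induced by the sup-norm satisfies ‖(α·I − S)^{−1}‖_{∞→∞} ≥ c·min(r/log r, d). -/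
/-!
A lower bound for `‖(α - S)⁻¹‖_{∞→∞}` follows from any test vector `f` with `‖f‖_∞ ≳ 1` and
`‖(α - S) f‖_∞ ≲ 1 / L`. Take `f` radial around `o`. On the tree ball, `d S` acts on radial
functions as `F ↦ (k + 1 ↦ F k + (d - 1) F (k + 2))`, which has the radial eigenfunction
`u n = (α - w₂) w₁ⁿ - (α - w₁) w₂ⁿ` with eigenvalue `α d`, where `w₁, w₂` are the roots of
`(d - 1) w² - α d w + 1`. Since `|α| = 1`, one root satisfies `1 ≤ |w₁| ≤ 1 + 2 / (d - 1)` and the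
other `|w₂| ≤ 1 / (d - 1)`, so `u` stays bounded up to distance `d / 2`. Multiplying `u` by the
linear cutoff `(L - n) / L` with `L = min r (d / 3)` leaves a residual of size `O(1 / L)`, whence
the norm is `≳ min r d ≥ min (r / log r) d / 2`. For `d ≤ 2` the trivial bound `≥ 1` suffices.
-/

noncomputable section

namespace Instability

/-- Ball of radius `r` around `x` in the graph metric. -/
def gball {V : Type*} (G : SimpleGraph V) (x : V) (r : ℕ) : Set V :=
  {y | G.Reachable x y ∧ G.dist x y ≤ r}

end Instability

namespace SimpleGraph

variable {V : Type*} {G : SimpleGraph V}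

lemma Walk.dist_le_of_mem_support {u v w : V} {p : G.Walk u v} (hp : p.length = G.dist u v)
    (hw : w ∈ p.support) : G.dist u w ≤ G.dist u v := by
  classical
  calc G.dist u w ≤ (p.takeUntil w hw).length := dist_le _
    _ ≤ G.dist u v := hp ▸ p.length_takeUntil_le_length hw

lemma Reachable.exists_adj_dist_add_one_eq {o v : V} (hv : G.Reachable o v) (hov : o ≠ v) :
    ∃ x, G.Adj v x ∧ G.dist o x + 1 = G.dist o v := by
  obtain ⟨p, hp⟩ := hv.exists_walk_length_eq_dist
  have hpos := hv.pos_dist_of_ne hov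
  have hnil : ¬p.Nil := fun h => by rw [h.length_eq_zero] at hp; omega
  have hadj := p.adj_penultimate hnil
  have hle : G.dist o p.penultimate ≤ G.dist o v - 1 := by
    simpa only [Walk.length_dropLast, hp] using dist_le p.dropLast
  refine ⟨_, hadj.symm, ?_⟩
  rcases hadj.diff_dist_adj (u := o) with h | h | h <;> omega

lemma Walk.length_induce {s : Set V} {u v : V} (p : G.Walk u v) (hp : ∀ x ∈ p.support, x ∈ s) :
    (p.induce s hp).length = p.length := by
  have h := congrArg Walk.length (p.map_induce hp)
  rw [Walk.length_map] at h
  exact h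

lemma IsAcyclic.eq_of_adj_of_dist_add_one_eq (hG : G.IsAcyclic) {o v u w : V}
    (hu : G.Adj v u) (hw : G.Adj v w) (hdu : G.dist o u + 1 = G.dist o v)
    (hdw : G.dist o w + 1 = G.dist o v) : u = w := by
  have hv : G.Reachable o v := Reachable.of_dist_ne_zero (by omega)
  obtain ⟨p, hp, -⟩ := hv.exists_path_of_dist
  suffices key : ∀ x, G.Adj v x → G.dist o x + 1 = G.dist o v → x = p.penultimate from
    (key u hu hdu).trans (key w hw hdw).symm
  intro x hx hdx
  obtain ⟨q, hq, hql⟩ := (hv.trans hx.reachable).exists_path_of_dist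
  have hvq : v ∉ q.support := fun h => by have := Walk.dist_le_of_mem_support hql h; omega
  exact hG.eq_penultimate_of_adj_end hp hx
    (hG.mem_support_of_ne_mem_support_of_adj_of_isPath hp hq hx hvq)

end SimpleGraph

namespace Matrix

theorem norm_apply_le_mul_iSup_sum_norm_inv {ι 𝕜 : Type*} [Fintype ι] [DecidableEq ι]
    [NormedCommRing 𝕜] {M : Matrix ι ι 𝕜} (hM : IsUnit M.det) {f : ι → 𝕜} {ε : ℝ}
    (hf : ∀ j, ‖(M *ᵥ f) j‖ ≤ ε) (i : ι) : ‖f i‖ ≤ ε * ⨆ k, ∑ j, ‖M⁻¹ k j‖ := by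
  have hfi : f i = ∑ j, M⁻¹ i j * (M *ᵥ f) j := by
    conv_lhs => rw [← one_mulVec f, ← nonsing_inv_mul M hM, ← mulVec_mulVec]
    rfl
  calc ‖f i‖ ≤ ∑ j, ‖M⁻¹ i j‖ * ε := by
        rw [hfi]
        exact (norm_sum_le _ _).trans (Finset.sum_le_sum fun j _ =>
          (norm_mul_le _ _).trans (mul_le_mul_of_nonneg_left (hf j) (norm_nonneg _)))
    _ = ε * ∑ j, ‖M⁻¹ i j‖ := by rw [← Finset.sum_mul, mul_comm]
    _ ≤ ε * ⨆ k, ∑ j, ‖M⁻¹ k j‖ :=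
        mul_le_mul_of_nonneg_left
          (le_ciSup (f := fun k => ∑ j, ‖M⁻¹ k j‖) (Set.finite_range _).bddAbove i)
          ((norm_nonneg _).trans (hf i))

end Matrix

namespace Instability

open SimpleGraph Matrix

variable {V : Type*} {G : SimpleGraph V} {o : V} {r : ℕ}

lemma self_mem_gball : o ∈ gball G o r := ⟨Reachable.refl o, by simp⟩

/-- Shortest walks from `o` to a point of the ball stay in the ball. -/
lemma dist_induce_gball {x : V} (hx : x ∈ gball G o r) :
    (G.induce (gball G o r)).dist ⟨o, self_mem_gball⟩ ⟨x, hx⟩ = G.dist o x := by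
  obtain ⟨p, hp⟩ := hx.1.exists_walk_length_eq_dist
  have hps : ∀ y ∈ p.support, y ∈ gball G o r := fun y hy =>
    ⟨⟨by classical exact p.takeUntil y hy⟩, (Walk.dist_le_of_mem_support hp hy).trans hx.2⟩
  refine le_antisymm ((dist_le _).trans ((p.length_induce hps).trans hp).le) ?_
  obtain ⟨q, hq⟩ := (Walk.reachable (p.induce _ hps)).exists_walk_length_eq_dist
  rw [← hq, ← Walk.length_map (Embedding.induce _).toHom]
  exact dist_le _

lemma dist_add_one_eq_or_eq_add_one_of_adj (hT : (G.induce (gball G o r)).IsTree) {v x : V}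
    (hv : v ∈ gball G o r) (hx : G.Adj v x) :
    G.dist o x + 1 = G.dist o v ∨ G.dist o x = G.dist o v + 1 := by
  by_cases hxb : x ∈ gball G o r
  · have h := hT.dist_eq_dist_add_one_of_adj ⟨o, self_mem_gball⟩
      (v := ⟨v, hv⟩) (w := ⟨x, hxb⟩) (induce_adj.2 hx)
    rw [dist_induce_gball, dist_induce_gball] at h
    omega
  · have hxr : r < G.dist o x := by
      by_contra! h
      exact hxb ⟨hv.1.trans hx.reachable, h⟩
    have := hv.2
    rcases hx.diff_dist_adj (u := o) with h | h | h <;> omega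

lemma eq_of_adj_of_dist_add_one_eq (hT : (G.induce (gball G o r)).IsTree) {v u w : V}
    (hvr : G.dist o v ≤ r) (hu : G.Adj v u) (hw : G.Adj v w)
    (hdu : G.dist o u + 1 = G.dist o v) (hdw : G.dist o w + 1 = G.dist o v) : u = w := by
  have hv : G.Reachable o v := Reachable.of_dist_ne_zero (by omega)
  have hub : u ∈ gball G o r := ⟨hv.trans hu.reachable, by omega⟩
  have hwb : w ∈ gball G o r := ⟨hv.trans hw.reachable, by omega⟩
  have hvb : v ∈ gball G o r := ⟨hv, hvr⟩
  have := hT.isAcyclic.eq_of_adj_of_dist_add_one_eq (o := ⟨o, self_mem_gball⟩)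
    (v := ⟨v, hvb⟩) (u := ⟨u, hub⟩) (w := ⟨w, hwb⟩) (induce_adj.2 hu) (induce_adj.2 hw)
    (by rw [dist_induce_gball, dist_induce_gball]; exact hdu)
    (by rw [dist_induce_gball, dist_induce_gball]; exact hdw)
  exact congrArg Subtype.val this

variable {R : Type*} [Ring R]

open scoped Classical in
def radial (G : SimpleGraph V) (o : V) (F : ℕ → R) (v : V) : R :=
  if G.Reachable o v then F (G.dist o v) else 0

/-- The adjacency operator of the `d`-regular tree acting on functions of the distance to the
root. -/
def radialAdj (d : ℕ) (F : ℕ → R) : ℕ → R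
  | 0 => d * F 1
  | k + 1 => F k + (d - 1) * F (k + 2)

def radialOp (d : ℕ) (α : ℂ) (F : ℕ → ℂ) (n : ℕ) : ℂ := α * F n - (d : ℂ)⁻¹ * radialAdj d F n

section Sums

variable [Fintype V] [DecidableRel G.Adj]

lemma sum_neighborFinset_radial_of_dist_eq_add_one (hT : (G.induce (gball G o r)).IsTree)
    {v : V} {k : ℕ} (hv : G.Reachable o v) (hk : G.dist o v = k + 1) (hkr : k + 1 ≤ r)
    (F : ℕ → R) :
    ∑ x ∈ G.neighborFinset v, radial G o F x = F k + ((G.degree v : R) - 1) * F (k + 2) := by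
  classical
  obtain ⟨pa, hpa, hdpa⟩ := hv.exists_adj_dist_add_one_eq fun h => by simp [← h] at hk
  have hpa' : pa ∈ G.neighborFinset v := (mem_neighborFinset _ _ _).2 hpa
  have hchild : ∀ x ∈ (G.neighborFinset v).erase pa, radial G o F x = F (k + 2) := by
    intro x hx
    obtain ⟨hne, hx⟩ := Finset.mem_erase.1 hx
    rw [mem_neighborFinset] at hx
    rcases dist_add_one_eq_or_eq_add_one_of_adj hT ⟨hv, by omega⟩ hx with h | h
    · exact absurd (eq_of_adj_of_dist_add_one_eq hT (by omega) hx hpa h hdpa) hne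
    · rw [radial, if_pos (hv.trans hx.reachable), h, hk]
  rw [← Finset.add_sum_erase _ _ hpa', Finset.sum_congr rfl hchild, Finset.sum_const,
    Finset.card_erase_of_mem hpa', card_neighborFinset_eq_degree, nsmul_eq_mul,
    Nat.cast_sub (G.degree_pos_iff_exists_adj v |>.2 ⟨pa, hpa⟩), Nat.cast_one, radial,
    if_pos (hv.trans hpa.reachable)]
  congr 2
  omega

theorem sum_neighborFinset_radial {d : ℕ} (hT : (G.induce (gball G o r)).IsTree)
    (hdeg : ∀ v, G.Reachable o v → G.dist o v ≤ r - 1 → G.degree v = d)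
    {F : ℕ → R} (hF : ∀ n, r ≤ n → F n = 0) (v : V) :
    ∑ x ∈ G.neighborFinset v, radial G o F x = radial G o (radialAdj d F) v := by
  by_cases hv : G.Reachable o v
  swap
  · rw [radial, if_neg hv]
    refine Finset.sum_eq_zero fun x hx => if_neg fun hx' => hv ?_
    exact hx'.trans ((mem_neighborFinset _ _ _).1 hx).symm.reachable
  rw [radial, if_pos hv]
  obtain hk | ⟨k, hk⟩ : G.dist o v = 0 ∨ ∃ k, G.dist o v = k + 1 :=
    (G.dist o v).eq_zero_or_eq_succ_pred.imp_right fun h => ⟨_, h⟩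
  · obtain rfl : o = v := hv.dist_eq_zero_iff.1 hk
    have hnb : ∀ x ∈ G.neighborFinset o, radial G o F x = F 1 := fun x hx => by
      have hx := (mem_neighborFinset _ _ _).1 hx
      rw [radial, if_pos hx.reachable, dist_eq_one_iff_adj.2 hx]
    rw [Finset.sum_congr rfl hnb, Finset.sum_const, card_neighborFinset_eq_degree,
      hdeg o hv (by omega), nsmul_eq_mul, hk, radialAdj]
  rw [hk, radialAdj]
  by_cases hkr : k + 1 ≤ r
  · rw [sum_neighborFinset_radial_of_dist_eq_add_one hT hv hk hkr]
    by_cases hkr' : k + 1 ≤ r - 1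
    · rw [hdeg v hv (by omega)]
    · rw [hF (k + 2) (by omega), mul_zero, mul_zero]
  · rw [hF k (by omega), hF (k + 2) (by omega), mul_zero, add_zero]
    refine Finset.sum_eq_zero fun x hx => ?_
    have hx := (mem_neighborFinset _ _ _).1 hx
    rw [radial, if_pos (hv.trans hx.reachable)]
    rcases hx.diff_dist_adj (u := o) with h | h | h <;> exact hF _ (by omega)

end Sums

lemma norm_radial_le {g : ℕ → ℂ} {ε : ℝ} (hg : ∀ n, ‖g n‖ ≤ ε) (v : V) :
    ‖radial G o g v‖ ≤ ε := by
  unfold radial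
  split_ifs
  · exact hg _
  · exact norm_zero.trans_le ((norm_nonneg _).trans (hg 0))

lemma norm_natCast_sub_one {d : ℕ} (hd : d ≠ 0) : ‖(d : ℂ) - 1‖ = (d : ℝ) - 1 := by
  rw [← Nat.cast_pred (Nat.pos_of_ne_zero hd), Complex.norm_natCast,
    Nat.cast_pred (Nat.pos_of_ne_zero hd)]

def cutoff (L n : ℕ) : ℂ := ((L - n : ℕ) : ℂ) / L

lemma cutoff_of_le {L n : ℕ} (h : L ≤ n) : cutoff L n = 0 := by
  simp [cutoff, Nat.sub_eq_zero_of_le h]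

lemma cutoff_zero {L : ℕ} (hL : L ≠ 0) : cutoff L 0 = 1 := by
  simp [cutoff, hL]

lemma cutoff_eq_cutoff_add_one_add {L n : ℕ} (h : n < L) :
    cutoff L n = cutoff L (n + 1) + (L : ℂ)⁻¹ := by
  rw [cutoff, cutoff, show L - n = L - (n + 1) + 1 by omega, Nat.cast_succ, add_div, one_div]

section Cutoff

variable {d L : ℕ} {α : ℂ} {u : ℕ → ℂ} {B : ℝ}

lemma norm_radialOp_cutoff_mul_zero_le (hd : d ≠ 0) (hL : L ≠ 0)
    (hu : radialAdj d u 0 = α * d * u 0) (hB : ‖u 1‖ ≤ B) :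
    ‖radialOp d α (fun k => cutoff L k * u k) 0‖ ≤ B / L := by
  have hdC : (d : ℂ) ≠ 0 := Nat.cast_ne_zero.2 hd
  have hu1 : α * u 0 = u 1 := mul_left_cancel₀ hdC (by rw [radialAdj] at hu; linear_combination -hu)
  have h01 := cutoff_eq_cutoff_add_one_add (Nat.pos_of_ne_zero hL)
  rw [cutoff_zero hL] at h01
  have hres : radialOp d α (fun k => cutoff L k * u k) 0 = (L : ℂ)⁻¹ * u 1 := by
    rw [radialOp, radialAdj, cutoff_zero hL, inv_mul_cancel_left₀ hdC]
    linear_combination hu1 + u 1 * h01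
  rw [hres, norm_mul, norm_inv, Complex.norm_natCast, div_eq_inv_mul]
  gcongr

/-- Away from the ends of the cutoff the eigenvalue equation absorbs the cutoff's value, and only
its slope `1 / L` survives. -/
lemma norm_radialOp_cutoff_mul_add_one_le_of_lt (hd : d ≠ 0) {k : ℕ} (hkL : k + 1 < L)
    (hu : radialAdj d u (k + 1) = α * d * u (k + 1)) (hBk : ‖u k‖ ≤ B)
    (hBk2 : ‖u (k + 2)‖ ≤ B) :
    ‖radialOp d α (fun k => cutoff L k * u k) (k + 1)‖ ≤ B / L := by
  have hdC : (d : ℂ) ≠ 0 := Nat.cast_ne_zero.2 hd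
  have hd1 : (1 : ℝ) ≤ d := Nat.one_le_cast.2 (Nat.pos_of_ne_zero hd)
  have hk0 := cutoff_eq_cutoff_add_one_add (L := L) (n := k) (by omega)
  have hk1 := cutoff_eq_cutoff_add_one_add hkL
  rw [radialAdj] at hu
  have hres : radialOp d α (fun k => cutoff L k * u k) (k + 1) =
      -((d : ℂ)⁻¹ * (L : ℂ)⁻¹) * (u k - (d - 1) * u (k + 2)) := by
    rw [radialOp, radialAdj]
    linear_combination (-(d : ℂ)⁻¹ * u k) * hk0 + ((d : ℂ)⁻¹ * (d - 1) * u (k + 2)) * hk1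
      - ((d : ℂ)⁻¹ * cutoff L (k + 1)) * hu
      - (α * cutoff L (k + 1) * u (k + 1)) * inv_mul_cancel₀ hdC
  have hnum : ‖u k - (d - 1) * u (k + 2)‖ ≤ B + (d - 1) * B := by
    refine (norm_sub_le _ _).trans (add_le_add hBk ?_)
    rw [norm_mul, norm_natCast_sub_one hd]
    gcongr
  calc _ = (d : ℝ)⁻¹ * (L : ℝ)⁻¹ * ‖u k - (d - 1) * u (k + 2)‖ := by
        simp only [hres, norm_mul, norm_neg, norm_inv, Complex.norm_natCast]
    _ ≤ (d : ℝ)⁻¹ * (L : ℝ)⁻¹ * (B + (d - 1) * B) := by gcongr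
    _ = B / L := by field_simp; ring

lemma norm_radialOp_cutoff_mul_add_one_le_of_le (hd : d ≠ 0) {k : ℕ} (hkL : L ≤ k + 1)
    (hB : k < L → ‖u k‖ ≤ B) (hB0 : 0 ≤ B) :
    ‖radialOp d α (fun k => cutoff L k * u k) (k + 1)‖ ≤ B / L := by
  have hd1 : (1 : ℝ) ≤ d := Nat.one_le_cast.2 (Nat.pos_of_ne_zero hd)
  simp only [radialOp, radialAdj]
  rw [cutoff_of_le hkL, cutoff_of_le (by omega : L ≤ k + 2)]
  simp only [zero_mul, mul_zero, add_zero, zero_sub, norm_neg, norm_mul, norm_inv,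
    Complex.norm_natCast]
  have hck : ‖cutoff L k‖ * ‖u k‖ ≤ B / L := by
    rcases lt_or_ge k L with hk | hk
    · rw [cutoff_eq_cutoff_add_one_add hk, cutoff_of_le hkL, zero_add, norm_inv,
        Complex.norm_natCast, div_eq_inv_mul]
      gcongr
      exact hB hk
    · rw [cutoff_of_le hk, norm_zero, zero_mul]
      positivity
  calc _ ≤ 1 * (‖cutoff L k‖ * ‖u k‖) := by gcongr; exact inv_le_one_of_one_le₀ hd1
    _ ≤ B / L := by rwa [one_mul]

theorem norm_radialOp_cutoff_mul_le (hd : d ≠ 0) (hL : L ≠ 0)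
    (hu : ∀ n, radialAdj d u n = α * d * u n) (hB : ∀ n ≤ L, ‖u n‖ ≤ B) (n : ℕ) :
    ‖radialOp d α (fun k => cutoff L k * u k) n‖ ≤ B / L := by
  rcases n with _ | k
  · exact norm_radialOp_cutoff_mul_zero_le hd hL (hu 0) (hB 1 (by omega))
  rcases lt_or_ge (k + 1) L with hkL | hkL
  · exact norm_radialOp_cutoff_mul_add_one_le_of_lt hd hkL (hu (k + 1)) (hB k (by omega))
      (hB (k + 2) (by omega))
  · exact norm_radialOp_cutoff_mul_add_one_le_of_le hd hkL (fun hk => hB k hk.le)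
      ((norm_nonneg _).trans (hB 0 (Nat.zero_le _)))

end Cutoff

/-- For the roots `w₁, w₂` of `(d - 1) w² - α d w + 1`, the coefficients are chosen so that the
eigenvalue equation also holds at the root of the tree, where `u 1 = α u 0`. -/
def eigenSeq (α w₁ w₂ : ℂ) (n : ℕ) : ℂ := (α - w₂) * w₁ ^ n - (α - w₁) * w₂ ^ n

section Eigen

variable {d : ℕ} {α w₁ w₂ : ℂ}

lemma radialAdj_eigenSeq (hsum : (d - 1) * (w₁ + w₂) = α * d) (hprod : (d - 1) * (w₁ * w₂) = 1)
    (n : ℕ) : radialAdj d (eigenSeq α w₁ w₂) n = α * d * eigenSeq α w₁ w₂ n := by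
  have hw₁ : (d - 1) * w₁ ^ 2 - α * d * w₁ + 1 = 0 := by linear_combination w₁ * hsum - hprod
  have hw₂ : (d - 1) * w₂ ^ 2 - α * d * w₂ + 1 = 0 := by linear_combination w₂ * hsum - hprod
  rcases n with _ | k
  · simp only [radialAdj, eigenSeq]
    ring
  · simp only [radialAdj, eigenSeq]
    linear_combination (α - w₂) * w₁ ^ k * hw₁ - (α - w₁) * w₂ ^ k * hw₂

lemma exists_vieta (hd : (d : ℂ) ≠ 1) (α : ℂ) :
    ∃ w₁ w₂ : ℂ, (d - 1) * (w₁ + w₂) = α * d ∧ (d - 1) * (w₁ * w₂) = 1 ∧ ‖w₂‖ ≤ ‖w₁‖ := by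
  have hq : (d : ℂ) - 1 ≠ 0 := sub_ne_zero.2 hd
  obtain ⟨x, hx⟩ := exists_quadratic_eq_zero (a := (1 : ℂ)) (b := -(α * d / (d - 1)))
    (c := 1 / (d - 1)) one_ne_zero (IsAlgClosed.exists_eq_mul_self _)
  obtain ⟨y, -, hs, hp⟩ := vieta_formula_quadratic (b := α * d / (d - 1)) (c := 1 / (d - 1))
    (x := x) (by linear_combination hx)
  have hsum : (d - 1) * (x + y) = α * d := by rw [hs]; field_simp
  have hprod : (d - 1) * (x * y) = 1 := by rw [hp]; field_simp
  rcases le_total ‖y‖ ‖x‖ with h | h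
  · exact ⟨x, y, hsum, hprod, h⟩
  · exact ⟨y, x, by rw [add_comm]; exact hsum, by rw [mul_comm y]; exact hprod, h⟩

lemma norm_bounds_of_vieta (hd : 2 ≤ d) (hα : ‖α‖ = 1) (hsum : (d - 1) * (w₁ + w₂) = α * d)
    (hprod : (d - 1) * (w₁ * w₂) = 1) (h21 : ‖w₂‖ ≤ ‖w₁‖) :
    1 ≤ ‖w₁‖ ∧ ‖w₁‖ ≤ 1 + 2 / ((d : ℝ) - 1) ∧ ‖w₂‖ ≤ 1 / ((d : ℝ) - 1) := by
  have hq : (1 : ℝ) ≤ (d : ℝ) - 1 := by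
    have : (2 : ℝ) ≤ d := by exact_mod_cast hd
    linarith
  have hqn := norm_natCast_sub_one (d := d) (by omega)
  have hs : (d : ℝ) = ((d : ℝ) - 1) * ‖w₁ + w₂‖ := by
    rw [← hqn, ← norm_mul, hsum, norm_mul, hα, Complex.norm_natCast, one_mul]
  have hp : ((d : ℝ) - 1) * (‖w₁‖ * ‖w₂‖) = 1 := by
    rw [← hqn, ← norm_mul, ← norm_mul, hprod, norm_one]
  have htri : ‖w₁‖ ≤ ‖w₁ + w₂‖ + ‖w₂‖ := by
    simpa using norm_sub_le (w₁ + w₂) w₂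
  have h1 : 1 ≤ ‖w₁‖ := by
    by_contra! h
    have := norm_add_le w₁ w₂
    nlinarith [norm_nonneg w₂, mul_pos (sub_pos.2 h) (sub_pos.2 (h21.trans_lt h))]
  have h2 : ‖w₂‖ ≤ 1 / ((d : ℝ) - 1) := by
    rw [le_div_iff₀ (by linarith)]
    nlinarith [norm_nonneg w₂]
  refine ⟨h1, ?_, h2⟩
  have hs' : ‖w₁ + w₂‖ = d / ((d : ℝ) - 1) := by
    rw [eq_div_iff (by linarith), mul_comm]; exact hs.symm
  have : 1 + 2 / ((d : ℝ) - 1) = d / ((d : ℝ) - 1) + 1 / ((d : ℝ) - 1) := by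
    field_simp; ring
  rw [this, ← hs']
  linarith

lemma pow_le_exp_one_of_le_one_add {a x : ℝ} {n : ℕ} (ha : 0 ≤ a) (hax : a ≤ 1 + x)
    (hn : n * x ≤ 1) : a ^ n ≤ Real.exp 1 :=
  calc a ^ n ≤ Real.exp x ^ n := by gcongr; linarith [Real.add_one_le_exp x]
    _ = Real.exp (n * x) := (Real.exp_nat_mul x n).symm
    _ ≤ Real.exp 1 := Real.exp_le_exp.2 hn

lemma norm_eigenSeq_le (hd : 3 ≤ d) (hα : ‖α‖ = 1) (hw₁ : ‖w₁‖ ≤ 1 + 2 / ((d : ℝ) - 1))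
    (hw₂ : ‖w₂‖ ≤ 1 / ((d : ℝ) - 1)) {n : ℕ} (hn : 2 * n ≤ d - 1) :
    ‖eigenSeq α w₁ w₂ n‖ ≤ 9 := by
  have hq : (2 : ℝ) ≤ (d : ℝ) - 1 := by
    have : (3 : ℝ) ≤ d := by exact_mod_cast hd
    linarith
  have hq1 : 1 / ((d : ℝ) - 1) ≤ 1 / 2 := one_div_le_one_div_of_le (by norm_num) hq
  have hq2 : 2 / ((d : ℝ) - 1) ≤ 1 := (div_le_one (by linarith)).2 hq
  have hpow : ‖w₁‖ ^ n ≤ 3 := by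
    refine (pow_le_exp_one_of_le_one_add (norm_nonneg _) hw₁ ?_).trans
      (Real.exp_one_lt_d9.le.trans (by norm_num))
    have : (2 * n : ℝ) ≤ (d : ℝ) - 1 := by
      rw [← Nat.cast_pred (by omega)]; exact_mod_cast hn
    rw [mul_div_assoc', div_le_one (by linarith)]
    linarith
  have hpow₂ : ‖w₂‖ ^ n ≤ 1 := pow_le_one₀ (norm_nonneg _) (by linarith)
  have h₁ : ‖α - w₂‖ ≤ 2 := (norm_sub_le _ _).trans (by linarith)
  have h₂ : ‖α - w₁‖ ≤ 3 := (norm_sub_le _ _).trans (by linarith)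
  calc ‖eigenSeq α w₁ w₂ n‖ ≤ ‖α - w₂‖ * ‖w₁‖ ^ n + ‖α - w₁‖ * ‖w₂‖ ^ n := by
        rw [eigenSeq, ← norm_pow, ← norm_pow, ← norm_mul, ← norm_mul]
        exact norm_sub_le _ _
    _ ≤ 2 * 3 + 3 * 1 := by gcongr
    _ = 9 := by norm_num

lemma half_le_norm_eigenSeq_zero (hd : 3 ≤ d) (h1 : 1 ≤ ‖w₁‖)
    (hw₂ : ‖w₂‖ ≤ 1 / ((d : ℝ) - 1)) : 1 / 2 ≤ ‖eigenSeq α w₁ w₂ 0‖ := by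
  have hq : 1 / ((d : ℝ) - 1) ≤ 1 / 2 := one_div_le_one_div_of_le (by norm_num) (by
    have : (3 : ℝ) ≤ d := by exact_mod_cast hd
    linarith)
  have := norm_sub_norm_le w₁ w₂
  simp only [eigenSeq, pow_zero, mul_one, sub_sub_sub_cancel_left]
  linarith

end Eigen

variable [DecidableEq V] [DecidableRel G.Adj] {d : ℕ}

abbrev shiftedAdj (G : SimpleGraph V) [DecidableRel G.Adj] (d : ℕ) (α : ℂ) : Matrix V V ℂ :=
  α • 1 - (d : ℂ)⁻¹ • G.adjMatrix ℂ

lemma norm_apply_le_one (hd : 1 ≤ d) {α : ℂ} (hα : ‖α‖ = 1) (i j : V) :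
    ‖shiftedAdj G d α i j‖ ≤ 1 := by
  have hd' : (1 : ℝ) ≤ d := by exact_mod_cast hd
  rcases eq_or_ne i j with rfl | hij
  · simp [hα]
  · by_cases h : G.Adj i j
    · simpa [hij, h] using inv_le_one_of_one_le₀ hd'
    · simp [hij, h]

variable [Fintype V]

lemma mulVec_radial (hT : (G.induce (gball G o r)).IsTree)
    (hdeg : ∀ v, G.Reachable o v → G.dist o v ≤ r - 1 → G.degree v = d)
    {F : ℕ → ℂ} (hF : ∀ n, r ≤ n → F n = 0) (α : ℂ) :
    shiftedAdj G d α *ᵥ radial G o F = radial G o (radialOp d α F) := by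
  funext v
  rw [sub_mulVec, smul_mulVec, smul_mulVec, one_mulVec, Pi.sub_apply, Pi.smul_apply,
    Pi.smul_apply, adjMatrix_mulVec_apply, sum_neighborFinset_radial hT hdeg hF, smul_eq_mul,
    smul_eq_mul]
  unfold radial
  split_ifs <;> simp [radialOp]

lemma one_le_iSup_sum_norm_inv (hd : 1 ≤ d) {α : ℂ} (hα : ‖α‖ = 1) (o : V)
    (hdet : IsUnit (shiftedAdj G d α).det) :
    1 ≤ ⨆ i : V, ∑ j : V, ‖(shiftedAdj G d α)⁻¹ i j‖ := by
  have h := norm_apply_le_mul_iSup_sum_norm_inv hdet (f := Pi.single o 1) (ε := 1)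
    (fun j => by rw [mulVec_single_one]; exact norm_apply_le_one hd hα j o) o
  simpa using h

theorem le_iSup_sum_norm_inv_of_isTree (hT : (G.induce (gball G o r)).IsTree)
    (hdeg : ∀ v, G.Reachable o v → G.dist o v ≤ r - 1 → G.degree v = d)
    {L : ℕ} (hL : L ≠ 0) (hLr : L ≤ r) (hLd : 3 * L ≤ d) {α : ℂ} (hα : ‖α‖ = 1)
    (hdet : IsUnit (shiftedAdj G d α).det) :
    (L : ℝ) / 18 ≤ ⨆ i : V, ∑ j : V, ‖(shiftedAdj G d α)⁻¹ i j‖ := by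
  have hd : 3 ≤ d := by omega
  obtain ⟨w₁, w₂, hsum, hprod, h21⟩ := exists_vieta (d := d) (by norm_cast; omega) α
  obtain ⟨h1, hw₁, hw₂⟩ := norm_bounds_of_vieta (by omega) hα hsum hprod h21
  set F : ℕ → ℂ := fun n => cutoff L n * eigenSeq α w₁ w₂ n
  have hF : ∀ n, r ≤ n → F n = 0 := fun n hn => by simp [F, cutoff_of_le (hLr.trans hn)]
  have hres (v : V) : ‖(shiftedAdj G d α *ᵥ radial G o F) v‖ ≤ 9 / L := by
    rw [mulVec_radial hT hdeg hF]
    exact norm_radial_le (norm_radialOp_cutoff_mul_le (by omega) hL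
      (radialAdj_eigenSeq hsum hprod) fun n hn => norm_eigenSeq_le hd hα hw₁ hw₂ (by omega)) v
  have hFo : radial G o F o = eigenSeq α w₁ w₂ 0 := by
    simp [radial, F, cutoff_zero hL]
  have key := norm_apply_le_mul_iSup_sum_norm_inv hdet hres o
  rw [hFo] at key
  have hL0 : (0 : ℝ) < L := by exact_mod_cast Nat.pos_of_ne_zero hL
  have := (half_le_norm_eigenSeq_zero hd h1 hw₂).trans key
  rw [div_mul_eq_mul_div, le_div_iff₀ hL0] at this
  linarith

lemma div_log_le_two_mul {x : ℝ} (hx : 2 ≤ x) : x / Real.log x ≤ 2 * x := by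
  have hlog : 1 / 2 ≤ Real.log x :=
    (by linarith [Real.log_two_gt_d9] : (1 : ℝ) / 2 ≤ Real.log 2).trans
      (Real.log_le_log (by norm_num) hx)
  rw [div_le_iff₀ (by linarith)]
  nlinarith

/-- Lemma A.12 (instability of the naive self-consistent equation):
`‖(α − S)⁻¹‖_{∞→∞} ≥ c·min(r/log r, d)`, where `‖·‖_{∞→∞}` is the maximum absolute
row sum, expressed below via the supremum over rows. -/
theorem instability :
    ∃ c : ℝ, 0 < c ∧
    ∀ (V : Type) (_ : Fintype V) (_ : DecidableEq V)
      (G : SimpleGraph V) (_ : DecidableRel G.Adj) (o : V) (d r : ℕ),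
      1 ≤ d → 2 ≤ r →
      -- the ball of radius r around o induces a tree
      (SimpleGraph.induce (gball G o r) G).IsTree →
      -- every vertex at distance at most r − 1 from o has degree exactly d in G
      (∀ v, G.Reachable o v → G.dist o v ≤ r - 1 → G.degree v = d) →
      ∀ α : ℂ, ‖α‖ = 1 →
      IsUnit (α • (1 : Matrix V V ℂ) - (d : ℂ)⁻¹ • G.adjMatrix ℂ).det →
      c * min ((r : ℝ) / Real.log r) (d : ℝ) ≤
        ⨆ i : V, ∑ j : V, ‖(α • (1 : Matrix V V ℂ) - (d : ℂ)⁻¹ • G.adjMatrix ℂ)⁻¹ i j‖ := by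
  refine ⟨1 / 180, by norm_num, ?_⟩
  intro V _ _ G _ o d r hd hr hT hdeg α hα hdet
  have hmin : min ((r : ℝ) / Real.log r) d ≤ 2 * min (r : ℝ) d := by
    rw [mul_min_of_nonneg (r : ℝ) (d : ℝ) (by norm_num : (0 : ℝ) ≤ 2)]
    exact min_le_min (div_log_le_two_mul (by exact_mod_cast hr))
      (le_mul_of_one_le_left d.cast_nonneg one_le_two)
  rcases le_or_gt d 2 with hd2 | hd3
  · have hd2' : (d : ℝ) ≤ 2 := by exact_mod_cast hd2
    have := one_le_iSup_sum_norm_inv hd hα o hdet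
    have := min_le_right ((r : ℝ) / Real.log r) d
    linarith
  · set L := min r (d / 3)
    have hL : (min r d : ℝ) ≤ 5 * L := by exact_mod_cast (show min r d ≤ 5 * L by omega)
    have := le_iSup_sum_norm_inv_of_isTree hT hdeg (L := L) (by omega) (min_le_left _ _)
      (by omega) hα hdet
    linarith

end Instability
end
end

section
/- Let q ≥ 1 be a real number and let 𝕋 be a finite graph in which every vertex has degree at most q + 1. Then the adjacency matrix A^𝕋 of 𝕋 satisfies ‖A^𝕋‖ ≤ q + 1, where ‖·‖ is the operator norm induced by the Euclidean norm. If in addition 𝕋 is a tree, then ‖A^𝕋‖ ≤ 2·√q. -/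
/-!
Both bounds are instances of the Schur test for a symmetric nonnegative matrix `A`: if some
positive vector `p` satisfies `A p ≤ C p` entrywise, then `‖A‖ ≤ C`. Indeed, by weighted AM-GM,
`|xᵢ xⱼ| ≤ (pⱼ/pᵢ · xᵢ² + pᵢ/pⱼ · xⱼ²)/2`, so the quadratic form of `A` is bounded by
`∑ᵢ (A p)ᵢ / pᵢ · xᵢ² ≤ C ‖x‖²`, and for a symmetric operator this bounds the norm.

For the degree bound take `p = 1`. For a tree rooted at `r`, take `p v = q^(-dist(r, v)/2)`:
each vertex has at most one neighbour (its parent) not farther from `r`, contributing `√q · p v`,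
and at most `q` further neighbours (`q + 1 ≤ 2q` at the root) contributing `p v / √q` each.
-/

open scoped RealInnerProductSpace
open Matrix Finset

theorem ContinuousLinearMap.norm_le_of_abs_inner_le {E : Type*} [NormedAddCommGroup E]
    [InnerProductSpace ℝ E] {T : E →L[ℝ] E} (hT : (T : E →ₗ[ℝ] E).IsSymmetric) {C : ℝ}
    (hC : 0 ≤ C) (h : ∀ x, |⟪T x, x⟫| ≤ C * ‖x‖ ^ 2) : ‖T‖ ≤ C := by
  rw [T.norm_eq_iSup_rayleighQuotient hT]
  refine ciSup_le fun x => ?_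
  rcases eq_or_ne x 0 with rfl | hx
  · simpa using hC
  rw [rayleighQuotient, reApplyInnerSelf_apply, RCLike.re_to_real, abs_div, abs_sq,
    div_le_iff₀ (by positivity)]
  exact h x

theorem two_mul_abs_mul_le {a b s t : ℝ} (hs : 0 < s) (ht : 0 < t) :
    2 * |a * b| ≤ t / s * a ^ 2 + s / t * b ^ 2 := by
  rw [div_mul_eq_mul_div, div_mul_eq_mul_div, div_add_div _ _ hs.ne' ht.ne',
    le_div_iff₀ (by positivity), abs_mul, ← sq_abs a, ← sq_abs b]
  nlinarith [sq_nonneg (t * |a| - s * |b|)]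

namespace Matrix

variable {n : Type*} [Fintype n] {A : Matrix n n ℝ} {p : n → ℝ} {C : ℝ}

theorem abs_dotProduct_mulVec_le_of_mulVec_le (hA : A.IsSymm) (hA₀ : ∀ i j, 0 ≤ A i j)
    (hp : ∀ i, 0 < p i) (hAp : A *ᵥ p ≤ C • p) (x : n → ℝ) :
    |x ⬝ᵥ A *ᵥ x| ≤ C * ∑ i, x i ^ 2 := by
  have hswap : ∑ i, ∑ j, A i j * (p i / p j * x j ^ 2) =
      ∑ i, ∑ j, A i j * (p j / p i * x i ^ 2) := by
    rw [Finset.sum_comm]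
    simp_rw [hA.apply]
  calc |x ⬝ᵥ A *ᵥ x| = |∑ i, ∑ j, A i j * (x i * x j)| := by
        simp only [dotProduct, mulVec, Finset.mul_sum]
        congr! 3 with i _ j _
        ring
    _ ≤ ∑ i, ∑ j, A i j * |x i * x j| := by
        refine (abs_sum_le_sum_abs _ _).trans (sum_le_sum fun i _ => ?_)
        refine (abs_sum_le_sum_abs _ _).trans_eq (sum_congr rfl fun j _ => ?_)
        rw [abs_mul, abs_of_nonneg (hA₀ i j)]
    _ ≤ ∑ i, ∑ j, A i j * ((p j / p i * x i ^ 2 + p i / p j * x j ^ 2) / 2) := by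
        gcongr with i _ j _
        · exact hA₀ i j
        · rw [le_div_iff₀ two_pos, mul_comm]
          exact two_mul_abs_mul_le (hp i) (hp j)
    _ = ∑ i, ∑ j, A i j * (p j / p i * x i ^ 2) := by
        simp_rw [mul_div_assoc', mul_add, add_div, sum_add_distrib, ← sum_div, hswap]
        ring
    _ = ∑ i, (A *ᵥ p) i * (x i ^ 2 / p i) := by
        simp only [mulVec, dotProduct, sum_mul]
        congr! 2 with i _ j _
        ring
    _ ≤ ∑ i, C * p i * (x i ^ 2 / p i) := by
        refine sum_le_sum fun i _ => mul_le_mul_of_nonneg_right (hAp i) ?_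
        have := hp i
        positivity
    _ = C * ∑ i, x i ^ 2 := by
        rw [mul_sum]
        congr! 1 with i
        field_simp [(hp i).ne']

theorem norm_toEuclideanCLM_le_of_mulVec_le [DecidableEq n] (hA : A.IsSymm)
    (hA₀ : ∀ i j, 0 ≤ A i j) (hp : ∀ i, 0 < p i) (hC : 0 ≤ C) (hAp : A *ᵥ p ≤ C • p) :
    ‖toEuclideanCLM (𝕜 := ℝ) A‖ ≤ C := by
  refine ContinuousLinearMap.norm_le_of_abs_inner_le
    (isSymmetric_toEuclideanLin_iff.2 (isHermitian_iff_isSymm.2 hA)) hC fun x => ?_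
  rw [real_inner_comm, inner_toEuclideanCLM, EuclideanSpace.real_norm_sq_eq]
  exact abs_dotProduct_mulVec_le_of_mulVec_le hA hA₀ hp hAp x

end Matrix

namespace SimpleGraph

variable {V : Type*} {G : SimpleGraph V}

theorem norm_toEuclideanCLM_adjMatrix_le_of_mulVec_le [Fintype V] [DecidableEq V]
    [DecidableRel G.Adj] {p : V → ℝ} (hp : ∀ v, 0 < p v) {C : ℝ} (hC : 0 ≤ C)
    (hAp : G.adjMatrix ℝ *ᵥ p ≤ C • p) : ‖toEuclideanCLM (𝕜 := ℝ) (G.adjMatrix ℝ)‖ ≤ C :=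
  norm_toEuclideanCLM_le_of_mulVec_le G.isSymm_adjMatrix
    (fun v w => by rw [adjMatrix_apply]; split_ifs <;> norm_num) hp hC hAp

theorem IsAcyclic.dist_eq_length (hG : G.IsAcyclic) {u v : V} {p : G.Walk u v}
    (hp : p.IsPath) : G.dist u v = p.length := by
  obtain ⟨q, hq, hlen⟩ := p.reachable.exists_path_of_dist
  have : p = q := congrArg Subtype.val ((hG.subsingleton_path u v).elim ⟨p, hp⟩ ⟨q, hq⟩)
  rw [this, hlen]

theorem IsAcyclic.eq_penultimate_of_adj_of_dist_le (hG : G.IsAcyclic) {r v u : V}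
    {p : G.Walk r v} (hp : p.IsPath) (hlen : p.length = G.dist r v) (hadj : G.Adj v u)
    (hdist : G.dist r u ≤ G.dist r v) : u = p.penultimate := by
  refine hG.eq_penultimate_of_adj_end hp hadj (by_contra fun hu => ?_)
  have := hG.dist_eq_length (hp.concat hu hadj)
  rw [Walk.length_concat] at this
  omega

theorem IsTree.card_filter_dist_le_le_one [Fintype V] [DecidableRel G.Adj] (hG : G.IsTree)
    (r v : V) : #{u ∈ G.neighborFinset v | G.dist r u ≤ G.dist r v} ≤ 1 := by
  obtain ⟨p, hp, hlen⟩ := hG.connected.exists_path_of_dist r v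
  refine card_le_one.2 fun u hu w hw => ?_
  simp only [mem_filter, mem_neighborFinset] at hu hw
  rw [hG.isAcyclic.eq_penultimate_of_adj_of_dist_le hp hlen hu.1 hu.2,
    hG.isAcyclic.eq_penultimate_of_adj_of_dist_le hp hlen hw.1 hw.2]

theorem IsTree.adjMatrix_mulVec_pow_dist_le [Fintype V] [DecidableRel G.Adj] (hG : G.IsTree)
    {s : ℝ} (hs : 1 ≤ s) (hdeg : ∀ v, (G.degree v : ℝ) ≤ s ^ 2 + 1) (r : V) :
    G.adjMatrix ℝ *ᵥ (fun v => s⁻¹ ^ G.dist r v) ≤ (2 * s) • fun v => s⁻¹ ^ G.dist r v := by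
  intro v
  have hs₀ : 0 < s := one_pos.trans_le hs
  have hinv₀ : 0 ≤ s⁻¹ := inv_nonneg.2 hs₀.le
  have hinv₁ : s⁻¹ ≤ 1 := inv_le_one_of_one_le₀ hs
  set P := s⁻¹ ^ G.dist r v
  set parents := {u ∈ G.neighborFinset v | G.dist r u ≤ G.dist r v}
  set children := {u ∈ G.neighborFinset v | ¬G.dist r u ≤ G.dist r v}
  have hparent : ∀ u ∈ parents, s⁻¹ ^ G.dist r u ≤ s * P := fun u hu => by
    have hdist : G.dist r v ≤ G.dist r u + 1 := by
      have := ((G.mem_neighborFinset v u).1 (mem_filter.1 hu).1).symm.diff_dist_adj (u := r)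
      omega
    calc s⁻¹ ^ G.dist r u = s * s⁻¹ ^ (G.dist r u + 1) := by
          rw [pow_succ, mul_left_comm, mul_inv_cancel₀ hs₀.ne', mul_one]
      _ ≤ s * P := by gcongr s * ?_; exact pow_le_pow_of_le_one hinv₀ hinv₁ hdist
  have hchild : ∀ u ∈ children, s⁻¹ ^ G.dist r u ≤ s⁻¹ * P := fun u hu => by
    rw [← pow_succ']
    exact pow_le_pow_of_le_one hinv₀ hinv₁ (not_le.1 (mem_filter.1 hu).2)
  have hcard : (#parents : ℝ) + #children = G.degree v := by
    rw [← Nat.cast_add, card_filter_add_card_filter_not, card_neighborFinset_eq_degree]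
  have hpar : (#parents : ℝ) ≤ 1 := by exact_mod_cast hG.card_filter_dist_le_le_one r v
  have hbound : (#parents : ℝ) * s + #children * s⁻¹ ≤ 2 * s := by
    rw [← div_eq_mul_inv, add_div' _ _ _ hs₀.ne', div_le_iff₀ hs₀]
    nlinarith [hdeg v,
      mul_nonneg (sub_nonneg.2 hpar) (sub_nonneg.2 (one_le_mul_of_one_le_of_one_le hs hs))]
  calc (G.adjMatrix ℝ *ᵥ fun v => s⁻¹ ^ G.dist r v) v
      = ∑ u ∈ parents, s⁻¹ ^ G.dist r u + ∑ u ∈ children, s⁻¹ ^ G.dist r u := by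
        rw [adjMatrix_mulVec_apply, sum_filter_add_sum_filter_not]
    _ ≤ #parents • (s * P) + #children • (s⁻¹ * P) :=
        add_le_add (sum_le_card_nsmul _ _ _ hparent) (sum_le_card_nsmul _ _ _ hchild)
    _ ≤ 2 * s * P := by
        rw [nsmul_eq_mul, nsmul_eq_mul, ← mul_assoc, ← mul_assoc, ← add_mul]
        exact mul_le_mul_of_nonneg_right hbound (pow_nonneg hinv₀ _)

end SimpleGraph

/-- Lemma A.3: a graph with all degrees at most `q+1` has adjacency matrix of operator norm
(induced by the Euclidean norm) at most `q+1`; if moreover the graph is a tree, the norm is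
at most `2√q`. -/
theorem adjacency_norm_bound (V : Type) [Fintype V] [DecidableEq V]
    (G : SimpleGraph V) [DecidableRel G.Adj] (q : ℝ) (hq : 1 ≤ q)
    (hdeg : ∀ v, (G.degree v : ℝ) ≤ q + 1) :
    ‖Matrix.toEuclideanCLM (𝕜 := ℝ) (G.adjMatrix ℝ)‖ ≤ q + 1 ∧
      (G.IsTree → ‖Matrix.toEuclideanCLM (𝕜 := ℝ) (G.adjMatrix ℝ)‖ ≤ 2 * Real.sqrt q) := by
  refine ⟨G.norm_toEuclideanCLM_adjMatrix_le_of_mulVec_le (p := fun _ => 1) (fun _ => one_pos)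
    (by linarith) fun v => by simpa using hdeg v, fun hG => ?_⟩
  obtain ⟨r⟩ := hG.nonempty
  have hs : 1 ≤ √q := Real.one_le_sqrt.2 hq
  refine G.norm_toEuclideanCLM_adjMatrix_le_of_mulVec_le
    (fun v => pow_pos (inv_pos.2 (one_pos.trans_le hs)) _) (by positivity)
    (hG.adjMatrix_mulVec_pow_dist_le hs (fun v => ?_) r)
  rw [Real.sq_sqrt (by linarith)]
  exact hdeg v
end

section
/- Let p, q ≥ 1 be integers and let 𝕋 be a finite tree with a distinguished root vertex o such that o has degree p and every vertex other than o has at most q children (i.e. degree at most q + 1). Then the adjacency matrix A^𝕋 of 𝕋 satisfies ‖A^𝕋‖ ≤ √q · Λ(max(p/q, 2)), where Λ(α) := α/√(α−1) and ‖·‖ is the operator norm induced by the Euclidean norm. -/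
/-! Schur test with the weight `v ↦ r ^ dist o v`, where `r = (q (α - 1))^(-1/2)` and
`α = max (p / q) 2`. At a vertex `v ≠ o` the weighted row sum is `(1/r + (deg v - 1) r)`
times the weight of `v`, and `1/r + q r = √q Λ(α)`; at the root it is
`p r ≤ α q r = √q Λ(α)`. -/

noncomputable section

/-- `Λ(α) := α / √(α − 1)`. -/
def lamF (α : ℝ) : ℝ := α / Real.sqrt (α - 1)

open Finset

namespace Matrix

variable {n : Type*} [Fintype n] [DecidableEq n]

/-- The Schur test: weighted Cauchy–Schwarz on each row, then the column condition. -/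
theorem norm_toEuclideanCLM_le_of_mulVec_le_of_vecMul_le {A : Matrix n n ℝ}
    (hA : ∀ i j, 0 ≤ A i j) {g : n → ℝ} (hg : ∀ i, 0 < g i) {K : ℝ} (hK : 0 ≤ K)
    (hrow : ∀ i, (A *ᵥ g) i ≤ K * g i) (hcol : ∀ j, (g ᵥ* A) j ≤ K * g j) :
    ‖toEuclideanCLM (𝕜 := ℝ) A‖ ≤ K := by
  refine ContinuousLinearMap.opNorm_le_bound _ hK fun x => ?_
  have hrow_sq : ∀ i, (∑ j, A i j * x j) ^ 2 ≤ K * g i * ∑ j, A i j * (x j ^ 2 / g j) := by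
    intro i
    calc (∑ j, A i j * x j) ^ 2 ≤ (∑ j, A i j * g j) * ∑ j, A i j * (x j ^ 2 / g j) := by
          refine sum_sq_le_sum_mul_sum_of_sq_le_mul _
            (fun j _ => mul_nonneg (hA i j) (hg j).le)
            (fun j _ => mul_nonneg (hA i j) (div_nonneg (sq_nonneg _) (hg j).le)) fun j _ => ?_
          exact le_of_eq (by field_simp [(hg j).ne'])
      _ ≤ K * g i * ∑ j, A i j * (x j ^ 2 / g j) := by
          gcongr
          · exact sum_nonneg fun j _ => mul_nonneg (hA i j) (div_nonneg (sq_nonneg _) (hg j).le)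
          · exact hrow i
  have hsq : ‖toEuclideanCLM (𝕜 := ℝ) A x‖ ^ 2 ≤ (K * ‖x‖) ^ 2 := by
    simp only [EuclideanSpace.real_norm_sq_eq, mul_pow]
    calc ∑ i, (toEuclideanCLM (𝕜 := ℝ) A x i) ^ 2
        = ∑ i, (∑ j, A i j * x j) ^ 2 := rfl
      _ ≤ ∑ i, K * g i * ∑ j, A i j * (x j ^ 2 / g j) := sum_le_sum fun i _ => hrow_sq i
      _ = K * ∑ j, (g ᵥ* A) j * (x j ^ 2 / g j) := by
          simp only [vecMul, dotProduct, mul_sum, sum_mul]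
          rw [sum_comm]
          exact sum_congr rfl fun j _ => sum_congr rfl fun i _ => by ring
      _ ≤ K * ∑ j, K * g j * (x j ^ 2 / g j) := by
          gcongr with j
          · exact div_nonneg (sq_nonneg _) (hg j).le
          · exact hcol j
      _ = K ^ 2 * ∑ j, x j ^ 2 := by
          rw [mul_sum, mul_sum]
          exact sum_congr rfl fun j _ => by field_simp [(hg j).ne']
  exact (pow_le_pow_iff_left₀ (norm_nonneg _) (by positivity) two_ne_zero).1 hsq

end Matrix

namespace SimpleGraph

variable {V : Type*} {G : SimpleGraph V}

lemma IsAcyclic.eq_penultimate_of_adj_of_dist_add_one (hG : G.IsAcyclic) {o u v : V}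
    {q : G.Walk o v} (hq : q.length = G.dist o v) (hadj : G.Adj v u)
    (hd : G.dist o u + 1 = G.dist o v) : u = q.penultimate := by
  classical
  obtain ⟨p, hp, hp_len⟩ := (q.reachable.trans hadj.reachable).exists_path_of_dist
  have hv : v ∉ p.support := fun hv => by
    have := (dist_le (p.takeUntil v hv)).trans (p.length_takeUntil_le_length hv)
    omega
  exact hG.eq_penultimate_of_adj_end (q.isPath_of_length_eq_dist hq) hadj
    (hG.mem_support_of_ne_mem_support_of_adj_of_isPath (q.isPath_of_length_eq_dist hq) hp
      hadj hv)

lemma IsTree.existsUnique_adj_dist_add_one (hG : G.IsTree) {o v : V} (hv : v ≠ o) :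
    ∃! u, G.Adj v u ∧ G.dist o u + 1 = G.dist o v := by
  obtain ⟨q, hq⟩ := (hG.connected.preconnected o v).exists_walk_length_eq_dist
  have hnil : ¬ q.Nil := fun h => hv h.eq.symm
  have hadj : G.Adj v q.penultimate := (q.adj_penultimate hnil).symm
  refine ⟨q.penultimate, ⟨hadj, ?_⟩,
    fun u hu => hG.isAcyclic.eq_penultimate_of_adj_of_dist_add_one hq hu.1 hu.2⟩
  have hle : G.dist o q.penultimate + 1 ≤ G.dist o v := by
    have := dist_le q.dropLast
    have := q.length_dropLast_add_one hnil
    omega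
  have := hG.dist_eq_dist_add_one_of_adj o hadj
  omega

variable [Fintype V] [DecidableRel G.Adj]

lemma sum_neighborFinset_pow_dist_self {R : Type*} [Semiring R] (o : V) (r : R) :
    ∑ u ∈ G.neighborFinset o, r ^ G.dist o u = G.degree o * r := by
  rw [sum_congr rfl fun u hu => by
      rw [dist_eq_one_iff_adj.2 ((mem_neighborFinset ..).1 hu), pow_one],
    sum_const, card_neighborFinset_eq_degree, nsmul_eq_mul]

lemma IsTree.sum_neighborFinset_pow_dist [DecidableEq V] {R : Type*} [Field R] (hG : G.IsTree)
    {o v : V} (hv : v ≠ o) {r : R} (hr : r ≠ 0) :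
    ∑ u ∈ G.neighborFinset v, r ^ G.dist o u =
      (r⁻¹ + (G.degree v - 1) * r) * r ^ G.dist o v := by
  obtain ⟨u₀, ⟨hadj, hd⟩, huniq⟩ := hG.existsUnique_adj_dist_add_one hv
  have hu₀ : u₀ ∈ G.neighborFinset v := (mem_neighborFinset ..).2 hadj
  have hchild : ∀ u ∈ (G.neighborFinset v).erase u₀, r ^ G.dist o u = r * r ^ G.dist o v := by
    intro u hu
    obtain ⟨hne, hu⟩ := mem_erase.1 hu
    rw [mem_neighborFinset] at hu
    rcases hG.dist_eq_dist_add_one_of_adj o hu with h | h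
    · exact absurd (huniq u ⟨hu, h.symm⟩) hne
    · rw [h, pow_succ, mul_comm]
  rw [← add_sum_erase _ _ hu₀, sum_congr rfl hchild, sum_const, card_erase_of_mem hu₀,
    card_neighborFinset_eq_degree, nsmul_eq_mul,
    Nat.cast_sub (G.degree_pos_iff_exists_adj v |>.2 ⟨u₀, hadj⟩), ← hd, pow_succ]
  field_simp
  push_cast
  ring

end SimpleGraph

lemma sqrt_mul_lamF_eq_add {q α : ℝ} (hq : 0 < q) (hα : 1 < α) :
    √q * lamF α = √(q * (α - 1)) + q / √(q * (α - 1)) := by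
  have hs : 0 < √(α - 1) := Real.sqrt_pos.2 (by linarith)
  have ht : 0 < √q := Real.sqrt_pos.2 hq
  rw [lamF, Real.sqrt_mul hq.le]
  field_simp
  rw [Real.sq_sqrt hq.le, Real.sq_sqrt (by linarith)]
  ring

lemma sqrt_mul_lamF_eq_div {q α : ℝ} (hq : 0 < q) (hα : 1 < α) :
    √q * lamF α = α * q / √(q * (α - 1)) := by
  have hs : 0 < √(α - 1) := Real.sqrt_pos.2 (by linarith)
  have ht : 0 < √q := Real.sqrt_pos.2 hq
  rw [lamF, Real.sqrt_mul hq.le]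
  field_simp
  rw [Real.sq_sqrt hq.le]

theorem rooted_tree_adjacency_norm_bound_general (V : Type) [Fintype V] [DecidableEq V]
    (G : SimpleGraph V) [DecidableRel G.Adj] (o : V) (p q : ℕ)
    (hq : 1 ≤ q)
    (htree : G.IsTree) (hroot : G.degree o = p)
    (hdeg : ∀ v, v ≠ o → G.degree v ≤ q + 1) :
    ‖Matrix.toEuclideanCLM (𝕜 := ℝ) (G.adjMatrix ℝ)‖ ≤
      Real.sqrt q * lamF (max ((p : ℝ) / q) 2) := by
  set α := max ((p : ℝ) / q) 2
  have hq₀ : (0 : ℝ) < q := by exact_mod_cast hq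
  have hα : 1 < α := by linarith [le_max_right ((p : ℝ) / q) 2]
  have hs : 0 < √(q * (α - 1)) := Real.sqrt_pos.2 (by nlinarith)
  set r := (√(q * (α - 1)))⁻¹
  have hr : 0 < r := inv_pos.2 hs
  have hrow :
      ∀ v, ∑ u ∈ G.neighborFinset v, r ^ G.dist o u ≤ √q * lamF α * r ^ G.dist o v := by
    intro v
    rcases eq_or_ne v o with rfl | hv
    · have hpα : (p : ℝ) ≤ α * q := (div_le_iff₀ hq₀).1 (le_max_left _ _)
      rw [SimpleGraph.sum_neighborFinset_pow_dist_self, hroot, SimpleGraph.dist_self, pow_zero,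
        mul_one, sqrt_mul_lamF_eq_div hq₀ hα, div_eq_mul_inv]
      gcongr
    · have hdeg' : (G.degree v : ℝ) - 1 ≤ q := by
        linarith [show (G.degree v : ℝ) ≤ q + 1 by exact_mod_cast hdeg v hv]
      rw [htree.sum_neighborFinset_pow_dist hv hr.ne', sqrt_mul_lamF_eq_add hq₀ hα, inv_inv,
        div_eq_mul_inv]
      gcongr
  refine Matrix.norm_toEuclideanCLM_le_of_mulVec_le_of_vecMul_le
    (fun u v => by rw [SimpleGraph.adjMatrix_apply]; exact ite_nonneg zero_le_one le_rfl)
    (fun v => pow_pos hr (G.dist o v))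
    (by rw [sqrt_mul_lamF_eq_div hq₀ hα]; positivity) (fun v => ?_) (fun v => ?_)
  · rw [SimpleGraph.adjMatrix_mulVec_apply]; exact hrow v
  · rw [SimpleGraph.adjMatrix_vecMul_apply]; exact hrow v

/-- Lemma A.4: a finite tree whose root `o` has degree `p` and all other vertices have at most
`q` children (degree at most `q+1`) has adjacency matrix of operator norm (induced by the
Euclidean norm) at most `√q · Λ(max(p/q, 2))`. -/
theorem rooted_tree_adjacency_norm_bound (V : Type) [Fintype V] [DecidableEq V]
    (G : SimpleGraph V) [DecidableRel G.Adj] (o : V) (p q : ℕ)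
    (hp : 1 ≤ p) (hq : 1 ≤ q)
    (htree : G.IsTree) (hroot : G.degree o = p)
    (hdeg : ∀ v, v ≠ o → G.degree v ≤ q + 1) :
    ‖Matrix.toEuclideanCLM (𝕜 := ℝ) (G.adjMatrix ℝ)‖ ≤
      Real.sqrt q * lamF (max ((p : ℝ) / q) 2) :=
  rooted_tree_adjacency_norm_bound_general V G o p q hq htree hroot hdeg
end
end

section
/- Let D ∈ ℕ and suppose a star tuning fork of degree D is rooted in a finite graph ℍ. Then the adjacency matrix of ℍ has both √D and −√D as eigenvalues, with corresponding eigenvectors supported on the 2D + 2 vertices {h₁, h₂} ∪ R₁ ∪ R₂ of the two stars of the tuning fork. -/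
/-!
The star `K_{1,D}` with hub value `μ` and spoke values `1` is an eigenvector of its own adjacency
matrix for `μ` whenever `μ ^ 2 = D`. Inside `H` the same vector also pushes the value `μ` onto the
base `o`; the difference of the two star vectors of the tuning fork cancels that term, while the
hub-degree and leaf conditions ensure that nothing else leaks out of the stars. For `D = 0` there
are no spokes and the difference of the two hubs alone lies in the kernel.
-/

open Finset Matrix SimpleGraph

section Vectors

variable {V α : Type*} [DecidableEq V] [CommRing α]

def starVector (h : V) (R : Finset V) (c s : α) : V → α :=
  c • Pi.single h 1 + s • ∑ r ∈ R, Pi.single r 1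

def forkVector (h₁ h₂ : V) (R₁ R₂ : Finset V) (c s : α) : V → α :=
  starVector h₁ R₁ c s - starVector h₂ R₂ c s

theorem smul_forkVector (μ c s : α) (h₁ h₂ : V) (R₁ R₂ : Finset V) :
    μ • forkVector h₁ h₂ R₁ R₂ c s = forkVector h₁ h₂ R₁ R₂ (μ * c) (μ * s) := by
  simp only [forkVector, starVector]
  module

theorem forkVector_apply_left {h₁ h₂ : V} {R₁ R₂ : Finset V} (c s : α) (h₁₂ : h₁ ≠ h₂)
    (h₁R₁ : h₁ ∉ R₁) (h₁R₂ : h₁ ∉ R₂) : forkVector h₁ h₂ R₁ R₂ c s h₁ = c := by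
  simp [forkVector, starVector, Finset.sum_apply, Pi.single_apply, h₁₂, h₁R₁, h₁R₂]

theorem support_forkVector_subset (h₁ h₂ : V) (R₁ R₂ : Finset V) (c s : α) :
    Function.support (forkVector h₁ h₂ R₁ R₂ c s) ⊆ ↑({h₁, h₂} ∪ R₁ ∪ R₂) := by
  intro v hv
  contrapose! hv
  simp_all [forkVector, starVector, Finset.sum_apply, Pi.single_apply]

theorem exists_forkVector_eq_smul [NoZeroDivisors α] [CharZero α] (h₁ h₂ : V) {R₁ R₂ : Finset V}
    {D : ℕ} (hR₁ : #R₁ = D) (hR₂ : #R₂ = D) {μ : α} (hμ : μ ^ 2 = D) :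
    ∃ c s : α, c ≠ 0 ∧
      forkVector h₁ h₂ R₁ R₂ (D * s) c = μ • forkVector h₁ h₂ R₁ R₂ c s := by
  rcases eq_or_ne D 0 with rfl | hD
  · have hμ₀ : μ = 0 := pow_eq_zero_iff two_ne_zero |>.1 (by simpa using hμ)
    refine ⟨1, 0, one_ne_zero, ?_⟩
    simp [card_eq_zero.1 hR₁, card_eq_zero.1 hR₂, hμ₀, forkVector, starVector]
  · have hμ₀ : μ ≠ 0 := by
      rintro rfl
      exact hD (by exact_mod_cast (by simpa using hμ.symm : (D : α) = 0))
    refine ⟨μ, 1, hμ₀, ?_⟩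
    rw [smul_forkVector, mul_one, mul_one, ← hμ, sq]

end Vectors

namespace SimpleGraph

variable {V : Type*} [Fintype V] {G : SimpleGraph V} [DecidableRel G.Adj]

theorem neighborFinset_eq_of_forall_adj_of_degree_le {v : V} {s : Finset V}
    (hadj : ∀ u ∈ s, G.Adj v u) (hdeg : G.degree v ≤ #s) : G.neighborFinset v = s :=
  (eq_of_subset_of_card_le (fun u hu => (G.mem_neighborFinset v u).2 (hadj u hu))
    (by rwa [card_neighborFinset_eq_degree])).symm

variable [DecidableEq V]

theorem adjMatrix_mulVec_single_one {α : Type*} [NonAssocSemiring α] (v : V) :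
    G.adjMatrix α *ᵥ Pi.single v 1 = ∑ u ∈ G.neighborFinset v, Pi.single u 1 := by
  ext i
  simp [Finset.sum_apply, Pi.single_apply, adj_comm]

variable {α : Type*} [CommRing α]

theorem adjMatrix_mulVec_starVector {o h : V} {R : Finset V} (c s : α)
    (hN : G.neighborFinset h = insert o R) (ho : o ∉ R)
    (hleaf : ∀ r ∈ R, G.neighborFinset r = {h}) :
    G.adjMatrix α *ᵥ starVector h R c s = c • Pi.single o 1 + starVector h R (#R * s) c := by
  have hspokes : ∑ r ∈ R, G.adjMatrix α *ᵥ Pi.single r 1 = #R • Pi.single h 1 := by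
    rw [sum_congr rfl fun r hr => by rw [adjMatrix_mulVec_single_one, hleaf r hr, sum_singleton],
      sum_const]
  rw [starVector, mulVec_add, mulVec_smul, mulVec_smul, mulVec_sum, hspokes,
    adjMatrix_mulVec_single_one, hN, sum_insert ho, starVector]
  module

theorem adjMatrix_mulVec_forkVector {o h₁ h₂ : V} {R₁ R₂ : Finset V} {D : ℕ} (c s : α)
    (hN₁ : G.neighborFinset h₁ = insert o R₁) (hN₂ : G.neighborFinset h₂ = insert o R₂)
    (ho₁ : o ∉ R₁) (ho₂ : o ∉ R₂)
    (hleaf₁ : ∀ r ∈ R₁, G.neighborFinset r = {h₁}) (hleaf₂ : ∀ r ∈ R₂, G.neighborFinset r = {h₂})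
    (hR₁ : #R₁ = D) (hR₂ : #R₂ = D) :
    G.adjMatrix α *ᵥ forkVector h₁ h₂ R₁ R₂ c s = forkVector h₁ h₂ R₁ R₂ (D * s) c := by
  rw [forkVector, mulVec_sub, adjMatrix_mulVec_starVector c s hN₁ ho₁ hleaf₁,
    adjMatrix_mulVec_starVector c s hN₂ ho₂ hleaf₂, hR₁, hR₂, forkVector]
  abel

end SimpleGraph

theorem star_tuning_fork_eigenvalues_general (V : Type) [Fintype V] [DecidableEq V]
    (H : SimpleGraph V) [DecidableRel H.Adj] (D : ℕ)
    (o h₁ h₂ : V) (R₁ R₂ : Finset V)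
    -- the base, hubs and spokes are pairwise distinct
    (h₁₂ : h₁ ≠ h₂)
    (hR₁card : R₁.card = D) (hR₂card : R₂.card = D)
    (hRnot : ∀ v ∈ R₁ ∪ R₂, v ≠ o ∧ v ≠ h₁ ∧ v ≠ h₂)
    -- both hubs are adjacent to the base
    (hbase₁ : H.Adj h₁ o) (hbase₂ : H.Adj h₂ o)
    -- each hub is adjacent to all of its spokes
    (hspoke₁ : ∀ v ∈ R₁, H.Adj h₁ v) (hspoke₂ : ∀ v ∈ R₂, H.Adj h₂ v)
    -- each hub has degree exactly D + 1 in H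
    (hdeg₁ : H.degree h₁ = D + 1) (hdeg₂ : H.degree h₂ = D + 1)
    -- every spoke is a leaf of H
    (hleaf : ∀ v ∈ R₁ ∪ R₂, H.degree v = 1) :
    (∃ w : V → ℝ, w ≠ 0 ∧ (H.adjMatrix ℝ).mulVec w = Real.sqrt D • w ∧
        ∀ v, w v ≠ 0 → v ∈ ({h₁, h₂} : Finset V) ∪ R₁ ∪ R₂) ∧
    (∃ w : V → ℝ, w ≠ 0 ∧ (H.adjMatrix ℝ).mulVec w = (-Real.sqrt D) • w ∧
        ∀ v, w v ≠ 0 → v ∈ ({h₁, h₂} : Finset V) ∪ R₁ ∪ R₂) := by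
  have ho₁ : o ∉ R₁ := fun ho => (hRnot o (mem_union_left _ ho)).1 rfl
  have ho₂ : o ∉ R₂ := fun ho => (hRnot o (mem_union_right _ ho)).1 rfl
  have hN₁ : H.neighborFinset h₁ = insert o R₁ :=
    neighborFinset_eq_of_forall_adj_of_degree_le (forall_mem_insert _ _ _ |>.2 ⟨hbase₁, hspoke₁⟩)
      (by rw [hdeg₁, card_insert_of_notMem ho₁, hR₁card])
  have hN₂ : H.neighborFinset h₂ = insert o R₂ :=
    neighborFinset_eq_of_forall_adj_of_degree_le (forall_mem_insert _ _ _ |>.2 ⟨hbase₂, hspoke₂⟩)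
      (by rw [hdeg₂, card_insert_of_notMem ho₂, hR₂card])
  have hleaf₁ (r : V) (hr : r ∈ R₁) : H.neighborFinset r = {h₁} :=
    neighborFinset_eq_of_forall_adj_of_degree_le (by simpa using (hspoke₁ r hr).symm)
      (by rw [hleaf r (mem_union_left _ hr), card_singleton])
  have hleaf₂ (r : V) (hr : r ∈ R₂) : H.neighborFinset r = {h₂} :=
    neighborFinset_eq_of_forall_adj_of_degree_le (by simpa using (hspoke₂ r hr).symm)
      (by rw [hleaf r (mem_union_right _ hr), card_singleton])
  have heigen (μ : ℝ) (hμ : μ ^ 2 = D) :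
      ∃ w : V → ℝ, w ≠ 0 ∧ (H.adjMatrix ℝ).mulVec w = μ • w ∧
        ∀ v, w v ≠ 0 → v ∈ ({h₁, h₂} : Finset V) ∪ R₁ ∪ R₂ := by
    obtain ⟨c, s, hc, hcs⟩ := exists_forkVector_eq_smul h₁ h₂ hR₁card hR₂card hμ
    refine ⟨forkVector h₁ h₂ R₁ R₂ c s, fun h0 => hc ?_, ?_,
      fun v hv => support_forkVector_subset h₁ h₂ R₁ R₂ c s hv⟩
    · rw [← forkVector_apply_left c s h₁₂ (fun h => (hRnot h₁ (mem_union_left _ h)).2.1 rfl)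
        (fun h => (hRnot h₁ (mem_union_right _ h)).2.1 rfl), h0, Pi.zero_apply]
    · rw [adjMatrix_mulVec_forkVector c s hN₁ hN₂ ho₁ ho₂ hleaf₁ hleaf₂ hR₁card hR₂card, hcs]
  have hsq : Real.sqrt D ^ 2 = D := Real.sq_sqrt D.cast_nonneg
  exact ⟨heigen _ hsq, heigen _ (by rw [neg_sq, hsq])⟩

/-- Lemma A.14: a star tuning fork of degree `D` rooted in a finite graph `H` produces the
eigenvalues `±√D` of the adjacency matrix of `H`, with eigenvectors supported on the
`2D + 2` vertices `{h₁, h₂} ∪ R₁ ∪ R₂` of the two stars. -/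
theorem star_tuning_fork_eigenvalues (V : Type) [Fintype V] [DecidableEq V]
    (H : SimpleGraph V) [DecidableRel H.Adj] (D : ℕ)
    (o h₁ h₂ : V) (R₁ R₂ : Finset V)
    -- the base, hubs and spokes are pairwise distinct
    (h₀₁ : o ≠ h₁) (h₀₂ : o ≠ h₂) (h₁₂ : h₁ ≠ h₂)
    (hR₁card : R₁.card = D) (hR₂card : R₂.card = D)
    (hRdisj : Disjoint R₁ R₂)
    (hRnot : ∀ v ∈ R₁ ∪ R₂, v ≠ o ∧ v ≠ h₁ ∧ v ≠ h₂)
    -- both hubs are adjacent to the base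
    (hbase₁ : H.Adj h₁ o) (hbase₂ : H.Adj h₂ o)
    -- each hub is adjacent to all of its spokes
    (hspoke₁ : ∀ v ∈ R₁, H.Adj h₁ v) (hspoke₂ : ∀ v ∈ R₂, H.Adj h₂ v)
    -- each hub has degree exactly D + 1 in H
    (hdeg₁ : H.degree h₁ = D + 1) (hdeg₂ : H.degree h₂ = D + 1)
    -- every spoke is a leaf of H
    (hleaf : ∀ v ∈ R₁ ∪ R₂, H.degree v = 1) :
    (∃ w : V → ℝ, w ≠ 0 ∧ (H.adjMatrix ℝ).mulVec w = Real.sqrt D • w ∧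
        ∀ v, w v ≠ 0 → v ∈ ({h₁, h₂} : Finset V) ∪ R₁ ∪ R₂) ∧
    (∃ w : V → ℝ, w ≠ 0 ∧ (H.adjMatrix ℝ).mulVec w = (-Real.sqrt D) • w ∧
        ∀ v, w v ≠ 0 → v ∈ ({h₁, h₂} : Finset V) ∪ R₁ ∪ R₂) :=
  star_tuning_fork_eigenvalues_general V H D o h₁ h₂ R₁ R₂ h₁₂ hR₁card hR₂card hRnot hbase₁ hbase₂
    hspoke₁ hspoke₂ hdeg₁ hdeg₂ hleaf
end

section
/- There is a universal constant C > 0 such that the following holds. Let n ≥ 1 be an integer, let 0 ≤ p ≤ n^{−1/2}, let D be a random variable with law Binomial(n, p), and let k be a natural number with k ≤ √n. Then |P(D = k) − ((pn)^k / k!)·e^{−pn}| ≤ C·(k²/n + p²·n)·((pn)^k / k!)·e^{−pn}. -/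
open MeasureTheory

noncomputable section

/-!
Write `b = C(n,k) pᵏ (1-p)ⁿ⁻ᵏ` and `q = (pn)ᵏ/k! · e^{-pn}` and compare the two factors of `b`
with those of `q`. The ratio `k! C(n,k) / nᵏ = (n)ₖ / nᵏ` lies in `[1 - k²/n, 1]` by Bernoulli's
inequality applied to `(n+1-k)ᵏ ≤ (n)ₖ`, and `(1-p)ⁿ⁻ᵏ e^{pn}` lies in `[1 - p²n, e^{pk}]` because
`1 - p ≤ e^{-p}` and `(1 - p) e^p ≥ 1 - p²`. Finally `e^{pk} - 1 ≤ 2pk ≤ k²/n + p²n` by AM-GM, so the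
estimate holds with `C = 1`.
-/

open Real Nat

lemma two_mul_mul_le_sq_div_add_sq_mul (a b : ℝ) {c : ℝ} (hc : 0 < c) :
    2 * a * b ≤ a ^ 2 / c + b ^ 2 * c := by
  have h : a ^ 2 / c + b ^ 2 * c - 2 * a * b = (a - b * c) ^ 2 / c := by
    field_simp
    ring
  nlinarith [div_nonneg (sq_nonneg (a - b * c)) hc.le]

lemma pow_mul_one_sub_sq_div_le_descFactorial {n k : ℕ} (hn : 0 < n) (hkn : k ≤ n) :
    (n : ℝ) ^ k * (1 - k ^ 2 / n) ≤ n.descFactorial k := by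
  have hn' : (0 : ℝ) < n := by exact_mod_cast hn
  have hkn' : (k : ℝ) ≤ n := by exact_mod_cast hkn
  set a : ℝ := (1 - k) / n with ha
  have bernoulli : 1 + k * a ≤ (1 + a) ^ k :=
    one_add_mul_le_pow (by rw [ha, le_div_iff₀ hn']; linarith) k
  have hscale : (n : ℝ) * (1 + a) = ((n + 1 - k : ℕ) : ℝ) := by
    rw [Nat.cast_sub (by omega), ha]
    push_cast
    field_simp
    ring
  have hlin : 1 - k ^ 2 / n ≤ 1 + k * a := by
    have : 1 + k * a - (1 - k ^ 2 / n) = k / n := by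
      rw [ha]
      field_simp
      ring
    linarith [div_nonneg (Nat.cast_nonneg k) hn'.le]
  calc (n : ℝ) ^ k * (1 - k ^ 2 / n) ≤ n ^ k * (1 + a) ^ k := by gcongr; exact hlin.trans bernoulli
    _ = ((n + 1 - k : ℕ) : ℝ) ^ k := by rw [← mul_pow, hscale]
    _ ≤ n.descFactorial k := by exact_mod_cast Nat.pow_sub_le_descFactorial n k

lemma le_one_of_sq_mul_le_one {n : ℕ} (hn : 0 < n) {p : ℝ} (h : p ^ 2 * n ≤ 1) : p ≤ 1 := by
  have : (1 : ℝ) ≤ n := by exact_mod_cast hn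
  nlinarith

lemma choose_mul_pow_le (n k : ℕ) {p : ℝ} (hp : 0 ≤ p) :
    n.choose k * p ^ k ≤ (p * n) ^ k / k ! := by
  calc (n.choose k : ℝ) * p ^ k ≤ (n ^ k / k !) * p ^ k := by
        gcongr
        exact_mod_cast Nat.choose_le_pow_div k n
    _ = (p * n) ^ k / k ! := by ring

lemma le_choose_mul_pow {n k : ℕ} (hn : 0 < n) (hkn : k ≤ n) {p : ℝ} (hp : 0 ≤ p) :
    (p * n) ^ k / k ! * (1 - k ^ 2 / n) ≤ n.choose k * p ^ k := by
  have hdesc : (n.descFactorial k : ℝ) = k ! * n.choose k := by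
    exact_mod_cast Nat.descFactorial_eq_factorial_mul_choose n k
  have key := mul_le_mul_of_nonneg_left (pow_mul_one_sub_sq_div_le_descFactorial hn hkn)
    (pow_nonneg hp k)
  rw [hdesc] at key
  calc (p * n) ^ k / k ! * (1 - k ^ 2 / n) = p ^ k * (n ^ k * (1 - k ^ 2 / n)) / k ! := by ring
    _ ≤ p ^ k * (k ! * n.choose k) / k ! := by gcongr
    _ = n.choose k * p ^ k := by field_simp

lemma one_sub_pow_le_exp_neg_mul {p : ℝ} (hp : p ≤ 1) (m : ℕ) :
    (1 - p) ^ m ≤ exp (-(p * m)) := by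
  calc (1 - p) ^ m ≤ exp (-p) ^ m :=
        pow_le_pow_left₀ (by linarith) (one_sub_le_exp_neg p) m
    _ = exp (-(p * m)) := by rw [← exp_nat_mul]; ring_nf

lemma exp_neg_mul_mul_one_sub_le_one_sub_pow {p : ℝ} (hp0 : 0 ≤ p) (hp1 : p ≤ 1) (m : ℕ) :
    exp (-(p * m)) * (1 - p ^ 2 * m) ≤ (1 - p) ^ m := by
  have bernoulli : 1 - p ^ 2 * m ≤ (1 - p ^ 2) ^ m := by
    have := one_add_mul_le_pow (a := -p ^ 2) (by nlinarith) m
    rw [← sub_eq_add_neg] at this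
    linarith
  have hsq : 1 - p ^ 2 ≤ (1 - p) * exp p := by
    have := mul_le_mul_of_nonneg_left (add_one_le_exp p) (by linarith : 0 ≤ 1 - p)
    nlinarith
  have hexp : exp (-(p * m)) * exp p ^ m = 1 := by
    rw [← exp_nat_mul, ← exp_add]
    ring_nf
    exact exp_zero
  calc exp (-(p * m)) * (1 - p ^ 2 * m) ≤ exp (-(p * m)) * ((1 - p) * exp p) ^ m := by
        gcongr
        exact bernoulli.trans (pow_le_pow_left₀ (by nlinarith) hsq m)
    _ = (1 - p) ^ m * (exp (-(p * m)) * exp p ^ m) := by rw [mul_pow]; ring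
    _ = (1 - p) ^ m := by rw [hexp, mul_one]

lemma choose_mul_pow_mul_one_sub_pow_le {n k : ℕ} (hkn : k ≤ n) {p : ℝ} (hp0 : 0 ≤ p)
    (hp1 : p ≤ 1) :
    n.choose k * p ^ k * (1 - p) ^ (n - k) ≤
      (p * n) ^ k / k ! * exp (-(p * n)) * exp (p * k) := by
  have hexp : exp (-(p * ((n - k : ℕ) : ℝ))) = exp (-(p * n)) * exp (p * k) := by
    rw [← exp_add, Nat.cast_sub hkn]
    ring_nf
  calc (n.choose k : ℝ) * p ^ k * (1 - p) ^ (n - k)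
      ≤ (p * n) ^ k / k ! * exp (-(p * ((n - k : ℕ) : ℝ))) :=
        mul_le_mul (choose_mul_pow_le n k hp0) (one_sub_pow_le_exp_neg_mul hp1 _)
          (pow_nonneg (by linarith) _) (by positivity)
    _ = (p * n) ^ k / k ! * exp (-(p * n)) * exp (p * k) := by rw [hexp, mul_assoc]

lemma le_choose_mul_pow_mul_one_sub_pow {n k : ℕ} (hn : 0 < n) (hkn : k ≤ n) {p : ℝ}
    (hp0 : 0 ≤ p) (hpn : p ^ 2 * n ≤ 1) :
    (p * n) ^ k / k ! * exp (-(p * n)) * ((1 - k ^ 2 / n) * (1 - p ^ 2 * n)) ≤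
      n.choose k * p ^ k * (1 - p) ^ (n - k) := by
  have hp1 := le_one_of_sq_mul_le_one hn hpn
  have hpow : exp (-(p * n)) * (1 - p ^ 2 * n) ≤ (1 - p) ^ (n - k) :=
    (exp_neg_mul_mul_one_sub_le_one_sub_pow hp0 hp1 n).trans
      (pow_le_pow_of_le_one (by linarith) (by linarith) (Nat.sub_le n k))
  calc (p * n) ^ k / k ! * exp (-(p * n)) * ((1 - k ^ 2 / n) * (1 - p ^ 2 * n))
      = ((p * n) ^ k / k ! * (1 - k ^ 2 / n)) * (exp (-(p * n)) * (1 - p ^ 2 * n)) := by ring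
    _ ≤ n.choose k * p ^ k * (1 - p) ^ (n - k) :=
        mul_le_mul (le_choose_mul_pow hn hkn hp0) hpow
          (mul_nonneg (exp_pos _).le (by linarith)) (by positivity)

theorem abs_binomial_sub_poisson_le {n k : ℕ} (hn : 0 < n) (hk : k ^ 2 ≤ n) {p : ℝ}
    (hp0 : 0 ≤ p) (hpn : p ^ 2 * n ≤ 1) :
    |n.choose k * p ^ k * (1 - p) ^ (n - k) - (p * n) ^ k / k ! * exp (-(p * n))| ≤
      (k ^ 2 / n + p ^ 2 * n) * ((p * n) ^ k / k ! * exp (-(p * n))) := by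
  have hn' : (0 : ℝ) < n := by exact_mod_cast hn
  have hkn : k ≤ n := (Nat.le_self_pow two_ne_zero k).trans hk
  have hA : (k : ℝ) ^ 2 / n ≤ 1 := by
    rw [div_le_one hn']
    exact_mod_cast hk
  have amgm := two_mul_mul_le_sq_div_add_sq_mul (k : ℝ) p hn'
  have hq : 0 ≤ (p * n) ^ k / k ! * exp (-(p * n)) := by positivity
  have hpk : |p * k| ≤ 1 := by
    rw [abs_of_nonneg (by positivity)]
    nlinarith
  have hexp : exp (p * k) ≤ 1 + (k ^ 2 / n + p ^ 2 * n) := by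
    have := (abs_le.1 (abs_exp_sub_one_le hpk)).2
    rw [abs_of_nonneg (by positivity)] at this
    nlinarith
  have upper := choose_mul_pow_mul_one_sub_pow_le hkn hp0 (le_one_of_sq_mul_le_one hn hpn)
  have lower := le_choose_mul_pow_mul_one_sub_pow hn hkn hp0 hpn
  rw [abs_sub_le_iff]
  constructor
  · nlinarith [mul_le_mul_of_nonneg_left hexp hq]
  · nlinarith [mul_nonneg hq (mul_nonneg (by positivity : (0 : ℝ) ≤ k ^ 2 / n)
      (by positivity : 0 ≤ p ^ 2 * n))]

/-- Lemma A.5 (Poisson approximation): if `D ~ Binomial(n, p)` with `p ≤ n^{−1/2}` and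
`k ≤ √n`, then `P(D = k) = ((pn)^k / k!)·e^{−pn}·(1 + O(k²/n + p²n))`. -/
theorem poisson_approximation :
    ∃ C : ℝ, 0 < C ∧
    ∀ (Ω : Type) (_ : MeasurableSpace Ω) (P : Measure Ω) (_ : IsProbabilityMeasure P)
      (n : ℕ) (p : ℝ) (D : Ω → ℕ) (k : ℕ),
      1 ≤ n → 0 ≤ p → p ≤ (n : ℝ) ^ (-(1 : ℝ) / 2) →
      -- D has law Binomial(n, p)
      (∀ j : ℕ, P {ω | D ω = j} =
        ENNReal.ofReal ((n.choose j : ℝ) * p ^ j * (1 - p) ^ (n - j))) →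
      (k : ℝ) ≤ Real.sqrt n →
      |(P {ω | D ω = k}).toReal -
          (p * n) ^ k / (Nat.factorial k) * Real.exp (-(p * n))| ≤
        C * ((k : ℝ) ^ 2 / n + p ^ 2 * n) *
          ((p * n) ^ k / (Nat.factorial k) * Real.exp (-(p * n))) := by
  refine ⟨1, one_pos, fun Ω _ P _ n p D k hn hp hpn hD hk => ?_⟩
  have hn' : (0 : ℝ) < n := by exact_mod_cast hn
  have hpsqrt : p * √n ≤ 1 := by
    have hsqrt : 0 < √n := sqrt_pos.2 hn'
    rw [← le_div_iff₀ hsqrt, one_div, sqrt_eq_rpow, ← rpow_neg hn'.le]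
    simpa only [neg_div] using hpn
  have hpn2 : p ^ 2 * n ≤ 1 := by
    calc p ^ 2 * n = (p * √n) ^ 2 := by rw [mul_pow, sq_sqrt hn'.le]
      _ ≤ 1 := pow_le_one₀ (by positivity) hpsqrt
  have hp1 := le_one_of_sq_mul_le_one hn hpn2
  have hk2 : k ^ 2 ≤ n := by
    exact_mod_cast (le_sqrt (Nat.cast_nonneg k) hn'.le).1 hk
  rw [hD k, ENNReal.toReal_ofReal (by positivity), one_mul]
  exact abs_binomial_sub_poisson_le hn hk2 hp hpn2
end
end
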